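/- arXiv:2304.09520 — 9 statements merged into one kernel-verified Lean document; each statement's English description precedes it below -/
import Mathlib

section
/- The ideal m^2 is not the ideal of maximal minors I(M) for any indecomposable integrally closed module M of rank two over a two-dimensional regular local ring (R, m). -/
open IsLocalRing

variable {R : Type*} [CommRing R]

/-- `r` lies in the integral closure of the ideal `I`. -/
def MemIntClIdeal (I : Ideal R) (r : R) : Prop :=
  ∃ n : ℕ, 0 < n ∧ ∃ c : ℕ → R, (∀ i, 1 ≤ i → i ≤ n → c i ∈ I ^ i) ∧
    r ^ n + ∑ i ∈ Finset.Icc 1 n, c i * r ^ (n - i) = 0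

/-- An ideal is integrally closed if it contains its integral closure. -/
def IsIntClIdeal (I : Ideal R) : Prop := ∀ r, MemIntClIdeal I r → r ∈ I

/-- Determinant of the 2×2 matrix with columns `v`, `w`. -/
def det2 (v w : Fin 2 → R) : R := v 0 * w 1 - v 1 * w 0

/-- The ideal of maximal minors `I(M)` of a rank-two module `M ⊆ R²`. -/
def minorsIdeal (M : Submodule R (Fin 2 → R)) : Ideal R :=
  Ideal.span {r | ∃ v ∈ M, ∃ w ∈ M, det2 v w = r}

/-- The ideal `I₁(M)` generated by the entries of a matrix whose columns generate `M`. -/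
def entriesIdeal (M : Submodule R (Fin 2 → R)) : Ideal R :=
  Ideal.span {r | ∃ v ∈ M, r = v 0 ∨ r = v 1}

/-- `v` is integral over the module `M` (Rees' determinantal criterion). -/
def MemIntClMod (M : Submodule R (Fin 2 → R)) (v : Fin 2 → R) : Prop :=
  ∀ w ∈ M, MemIntClIdeal (minorsIdeal M) (det2 v w)

/-- `M ⊆ R²` is integrally closed. -/
def IsIntClMod (M : Submodule R (Fin 2 → R)) : Prop :=
  ∀ v, MemIntClMod M v → v ∈ M

/-- `M` is indecomposable as a direct sum. -/
def IsIndecomposable (M : Submodule R (Fin 2 → R)) : Prop :=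
  ∀ N P : Submodule R (Fin 2 → R), N ⊔ P = M → N ⊓ P = ⊥ → N = ⊥ ∨ P = ⊥

/-- `M` has a nonzero free direct summand. -/
def HasFreeSummand (M : Submodule R (Fin 2 → R)) : Prop :=
  ∃ N P : Submodule R (Fin 2 → R), N ⊔ P = M ∧ N ⊓ P = ⊥ ∧ N ≠ ⊥ ∧ Module.Free R N

/-- An ideal is simple if it is not the product of two proper ideals. -/
def IsSimpleIdeal (I : Ideal R) : Prop :=
  I ≠ ⊤ ∧ ∀ J K : Ideal R, I = J * K → J = ⊤ ∨ K = ⊤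

/-- Any element of `I` is trivially integral over `I`. -/
lemma memIntClIdeal_of_mem {I : Ideal R} {r : R} (hr : r ∈ I) : MemIntClIdeal I r := by
  refine ⟨1, one_pos, fun _ => -r, ?_, ?_⟩
  · intro i h1 h2
    have : i = 1 := le_antisymm h2 h1
    subst this
    simpa [pow_one] using I.neg_mem hr
  · simp [Finset.Icc_self]

/-- If `M` contains a vector with a unit entry, then (by indecomposability) `M` is
cyclic, hence its minors ideal vanishes. -/
lemma minorsIdeal_eq_bot_of_unit_entry [IsDomain R]
    (M : Submodule R (Fin 2 → R)) (hind : IsIndecomposable M)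
    (u : Fin 2 → R) (hu : u ∈ M) (i : Fin 2) (hui : IsUnit (u i)) :
    minorsIdeal M = ⊥ := by
  obtain ⟨a, ha⟩ := hui
  set v : Fin 2 → R := (↑a⁻¹ : R) • u with hvdef
  have hv : v ∈ M := M.smul_mem _ hu
  have hvi : v i = 1 := by
    simp only [hvdef, Pi.smul_apply, smul_eq_mul, ← ha]
    exact a.inv_mul
  set N : Submodule R (Fin 2 → R) := Submodule.span R {v} with hN
  set P : Submodule R (Fin 2 → R) := M ⊓ LinearMap.ker (LinearMap.proj i) with hP
  have hsup : N ⊔ P = M := by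
    apply le_antisymm
    · refine sup_le ?_ inf_le_left
      rw [hN, Submodule.span_le, Set.singleton_subset_iff]
      exact hv
    · intro w hw
      have h1 : w i • v ∈ N := Submodule.smul_mem _ _ (Submodule.mem_span_singleton_self v)
      have h2 : w - w i • v ∈ P := by
        refine ⟨M.sub_mem hw (M.smul_mem _ hv), ?_⟩
        simp [LinearMap.mem_ker, hvi]
      have := Submodule.add_mem (N ⊔ P) (Submodule.mem_sup_left h1) (Submodule.mem_sup_right h2)
      simpa using this
  have hinf : N ⊓ P = ⊥ := by
    rw [eq_bot_iff]
    rintro x ⟨hxN, -, hxK⟩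
    obtain ⟨c, rfl⟩ := Submodule.mem_span_singleton.mp hxN
    have : c * v i = 0 := by simpa using hxK
    rw [hvi, mul_one] at this
    simp [this]
  have hNne : N ≠ ⊥ := by
    intro hb
    have hv0 : v = 0 := by
      have : v ∈ (⊥ : Submodule R (Fin 2 → R)) := hb ▸ Submodule.mem_span_singleton_self v
      simpa using this
    rw [hv0] at hvi
    exact one_ne_zero hvi.symm
  have hPbot : P = ⊥ := (hind N P hsup hinf).resolve_left hNne
  have hM : M = N := by rw [← hsup, hPbot, sup_bot_eq]
  rw [minorsIdeal, Ideal.span_eq_bot]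
  rintro r ⟨v', hv', w', hw', rfl⟩
  rw [hM, hN] at hv' hw'
  obtain ⟨c, rfl⟩ := Submodule.mem_span_singleton.mp hv'
  obtain ⟨d, rfl⟩ := Submodule.mem_span_singleton.mp hw'
  simp only [det2, Pi.smul_apply, smul_eq_mul]
  ring

theorem stmt0 [IsNoetherianRing R] [IsLocalRing R] [IsDomain R]
    [Infinite (ResidueField R)]
    (hdim : ringKrullDim R = 2)
    (hreg : ∃ x y : R, maximalIdeal R = Ideal.span {x, y})
    (M : Submodule R (Fin 2 → R)) (hfg : M.FG)
    (hrk : minorsIdeal M ≠ ⊥)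
    (hic : IsIntClMod M) (hind : IsIndecomposable M) :
    minorsIdeal M ≠ maximalIdeal R ^ 2 := by
  intro h
  -- the maximal ideal is nonzero
  have hm : maximalIdeal R ≠ ⊥ := by
    intro h0
    apply hrk
    rw [h, h0, ← Ideal.zero_eq_bot, zero_pow (by norm_num : (2:ℕ) ≠ 0)]
  by_cases hall : ∀ u ∈ M, u 0 ∈ maximalIdeal R ∧ u 1 ∈ maximalIdeal R
  · -- all entries lie in m: then M = m × m, which decomposes
    set Mmm : Submodule R (Fin 2 → R) :=
      Submodule.pi Set.univ (fun _ : Fin 2 => (maximalIdeal R : Submodule R R)) with hMmm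
    have hMle : M ≤ Mmm := by
      intro u hu
      rw [hMmm, Submodule.mem_pi]
      intro j _
      fin_cases j
      · exact (hall u hu).1
      · exact (hall u hu).2
    have hleM : Mmm ≤ M := by
      intro v hv
      rw [hMmm, Submodule.mem_pi] at hv
      apply hic
      intro w hw
      apply memIntClIdeal_of_mem
      rw [h, sq, det2]
      exact Ideal.sub_mem _ (Ideal.mul_mem_mul (hv 0 trivial) (hall w hw).2)
        (Ideal.mul_mem_mul (hv 1 trivial) (hall w hw).1)
    have hMeq : M = Mmm := le_antisymm hMle hleM
    set N : Submodule R (Fin 2 → R) :=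
      Submodule.map (LinearMap.single R (fun _ : Fin 2 => R) 0) (maximalIdeal R) with hN
    set P : Submodule R (Fin 2 → R) :=
      Submodule.map (LinearMap.single R (fun _ : Fin 2 => R) 1) (maximalIdeal R) with hP
    have hNmem : ∀ x ∈ maximalIdeal R, Pi.single (0 : Fin 2) x ∈ N := by
      intro x hx
      exact Submodule.mem_map.mpr ⟨x, hx, by simp⟩
    have hPmem : ∀ x ∈ maximalIdeal R, Pi.single (1 : Fin 2) x ∈ P := by
      intro x hx
      exact Submodule.mem_map.mpr ⟨x, hx, by simp⟩
    have hsup : N ⊔ P = M := by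
      apply le_antisymm
      · rw [hMeq]
        apply sup_le
        · rintro x ⟨a, ha, rfl⟩
          rw [Submodule.mem_pi]
          intro j _
          simp only [LinearMap.coe_single, Pi.single_apply]
          split
          · exact ha
          · exact Submodule.zero_mem _
        · rintro x ⟨a, ha, rfl⟩
          rw [Submodule.mem_pi]
          intro j _
          simp only [LinearMap.coe_single, Pi.single_apply]
          split
          · exact ha
          · exact Submodule.zero_mem _
      · intro w hw
        rw [hMeq, Submodule.mem_pi] at hw
        have hdec : w = Pi.single (0 : Fin 2) (w 0) + Pi.single (1 : Fin 2) (w 1) := by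
          funext j
          fin_cases j <;> simp
        rw [hdec]
        exact Submodule.add_mem _ (Submodule.mem_sup_left (hNmem _ (hw 0 trivial)))
          (Submodule.mem_sup_right (hPmem _ (hw 1 trivial)))
    have hinf : N ⊓ P = ⊥ := by
      rw [eq_bot_iff]
      rintro x ⟨hxN, hxP⟩
      obtain ⟨a, _, rfl⟩ := Submodule.mem_map.mp hxN
      obtain ⟨b, _, hb⟩ := Submodule.mem_map.mp hxP
      have h0 : (LinearMap.single R (fun _ : Fin 2 => R) 0) a 0 =
          (LinearMap.single R (fun _ : Fin 2 => R) 1) b 0 := by rw [hb]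
      simp only [LinearMap.coe_single] at h0 ⊢
      have ha0 : a = 0 := by simpa using h0.trans (by simp)
      simp [ha0]
    obtain ⟨x, hx, hx0⟩ := Submodule.exists_mem_ne_zero_of_ne_bot hm
    have hNne : N ≠ ⊥ := by
      intro hb
      have : Pi.single (0 : Fin 2) x ∈ (⊥ : Submodule R (Fin 2 → R)) := hb ▸ hNmem x hx
      rw [Submodule.mem_bot] at this
      apply hx0
      have := congrFun this 0
      simpa using this
    have hPne : P ≠ ⊥ := by
      intro hb
      have : Pi.single (1 : Fin 2) x ∈ (⊥ : Submodule R (Fin 2 → R)) := hb ▸ hPmem x hx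
      rw [Submodule.mem_bot] at this
      apply hx0
      have := congrFun this 1
      simpa using this
    rcases hind N P hsup hinf with h' | h'
    · exact hNne h'
    · exact hPne h'
  · -- some entry is a unit: then M is cyclic, contradicting `hrk`
    push_neg at hall
    obtain ⟨u, hu, hu'⟩ := hall
    by_cases h0 : u 0 ∈ maximalIdeal R
    · have h1 : IsUnit (u 1) := by
        by_contra hnu
        exact hu' h0 ((IsLocalRing.mem_maximalIdeal _).mpr hnu)
      exact hrk (minorsIdeal_eq_bot_of_unit_entry M hind u hu 1 h1)
    · have h0' : IsUnit (u 0) := by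
        by_contra hnu
        exact h0 ((IsLocalRing.mem_maximalIdeal _).mpr hnu)
      exact hrk (minorsIdeal_eq_bot_of_unit_entry M hind u hu 0 h0')
end

section
/- If M is an integrally closed torsion-free module of rank two over a two-dimensional regular local ring with no free direct summand, then M is contained in mF where F = M**, equivalently all entries of a presenting matrix of M lie in m, and consequently ord(I(M)) >= 2. -/
open IsLocalRing

variable {R : Type*} [CommRing R]

/-- If some element of `M` has a unit coordinate, then `M` has a free direct summand. -/
lemma hasFreeSummand_of_unit_entry [IsDomain R]
    (M : Submodule R (Fin 2 → R)) {v : Fin 2 → R} (hv : v ∈ M)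
    {i : Fin 2} (hu : IsUnit (v i)) : HasFreeSummand M := by
  obtain ⟨u, hu⟩ := hu
  refine ⟨Submodule.span R {v}, M ⊓ LinearMap.ker (LinearMap.proj i (φ := fun _ : Fin 2 => R)),
    ?_, ?_, ?_, ?_⟩
  · apply le_antisymm
    · exact sup_le ((Submodule.span_singleton_le_iff_mem v M).2 hv) inf_le_left
    · intro w hw
      have h1 : ((u⁻¹ : Rˣ) * w i) • v ∈ Submodule.span R {v} :=
        Submodule.smul_mem _ _ (Submodule.mem_span_singleton_self v)
      have h2 : w - ((u⁻¹ : Rˣ) * w i) • v ∈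
          M ⊓ LinearMap.ker (LinearMap.proj i (φ := fun _ : Fin 2 => R)) := by
        refine ⟨Submodule.sub_mem M hw (Submodule.smul_mem M _ hv), LinearMap.mem_ker.2 ?_⟩
        have hinv : ((u⁻¹ : Rˣ) : R) * v i = 1 := by
          rw [← hu]; exact Units.inv_mul u
        have h3 : (((u⁻¹ : Rˣ) : R) * w i) * v i = w i := by
          rw [mul_right_comm, hinv, one_mul]
        show w i - (((u⁻¹ : Rˣ) : R) * w i) * v i = 0
        rw [h3, sub_self]
      have := Submodule.add_mem _ (Submodule.mem_sup_left h1) (Submodule.mem_sup_right h2)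
      simpa using this
  · rw [eq_bot_iff]
    rintro x ⟨hx1, hx2⟩
    obtain ⟨c, rfl⟩ := Submodule.mem_span_singleton.1 hx1
    have hc : c = 0 := by
      obtain ⟨hx2a, hx2b⟩ := hx2
      have h4 := LinearMap.mem_ker.1 hx2b
      simp only [LinearMap.proj_apply, Pi.smul_apply, smul_eq_mul] at h4
      have : c * v i = 0 := h4
      rw [← hu] at this
      exact (Units.mul_left_eq_zero u).1 this
    rw [hc, zero_smul]; exact Submodule.zero_mem _
  · intro h
    have hv0 : v = 0 := by
      have h5 : v ∈ Submodule.span R {v} := Submodule.mem_span_singleton_self v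
      rw [h] at h5
      simpa using h5
    have : v i = 0 := by rw [hv0]; rfl
    rw [← hu] at this
    exact Units.ne_zero u this
  · have hvne : v ≠ 0 := by
      intro h
      have : v i = 0 := by rw [h]; rfl
      rw [← hu] at this
      exact Units.ne_zero u this
    exact Module.Free.of_equiv (LinearEquiv.toSpanNonzeroSingleton R (Fin 2 → R) v hvne)

theorem stmt1 [IsNoetherianRing R] [IsLocalRing R] [IsDomain R]
    (hdim : ringKrullDim R = 2)
    (hreg : ∃ x y : R, maximalIdeal R = Ideal.span {x, y})
    (M : Submodule R (Fin 2 → R)) (hfg : M.FG)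
    (hrk : minorsIdeal M ≠ ⊥)
    (hic : IsIntClMod M) (hnofree : ¬ HasFreeSummand M) :
    M ≤ (maximalIdeal R) • (⊤ : Submodule R (Fin 2 → R)) ∧
      minorsIdeal M ≤ maximalIdeal R ^ 2 := by
  have key : ∀ v ∈ M, ∀ i : Fin 2, v i ∈ maximalIdeal R := by
    intro v hv i
    by_contra h
    exact hnofree (hasFreeSummand_of_unit_entry M hv
      (not_not.1 fun hu => h (IsLocalRing.mem_maximalIdeal _ |>.2 hu)))
  constructor
  · intro v hv
    have hdec : v = Pi.single 0 (v 0) + Pi.single 1 (v 1) := by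
      funext j
      fin_cases j <;> simp
    rw [hdec]
    have h0 : Pi.single (0 : Fin 2) (v 0) =
        v 0 • (Pi.single (0:Fin 2) (1:R) : Fin 2 → R) := by
      funext j; simp [Pi.single_apply, mul_comm]
    have h1 : Pi.single (1 : Fin 2) (v 1) =
        v 1 • (Pi.single (1:Fin 2) (1:R) : Fin 2 → R) := by
      funext j; simp [Pi.single_apply, mul_comm]
    exact Submodule.add_mem _
      (h0 ▸ Submodule.smul_mem_smul (key v hv 0) Submodule.mem_top)
      (h1 ▸ Submodule.smul_mem_smul (key v hv 1) Submodule.mem_top)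
  · rw [minorsIdeal, Ideal.span_le]
    rintro r ⟨v, hv, w, hw, rfl⟩
    rw [pow_two, det2]
    exact Ideal.sub_mem _ (Ideal.mul_mem_mul (key v hv 0) (key w hw 1))
      (Ideal.mul_mem_mul (key v hv 1) (key w hw 0))
end

section
/- Let (R, m) be a two-dimensional regular local ring and M an integrally closed rank-two module contained in mF where F = M** ≅ R^2. Then mF is contained in M if and only if I(M) contains m^2; in particular if I(M) = m^2 then M = mF ≅ m ⊕ m. -/
open IsLocalRing

variable {R : Type*} [CommRing R]

lemma entry_mem_of_mem_smul_top {I : Ideal R} {v : Fin 2 → R}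
    (hv : v ∈ I • (⊤ : Submodule R (Fin 2 → R))) (i : Fin 2) : v i ∈ I := by
  refine Submodule.smul_induction_on hv ?_ ?_
  · intro a ha f _
    simpa using I.mul_mem_right (f i) ha
  · intro f g hf hg
    exact I.add_mem hf hg

lemma vec_mem_smul_top {I : Ideal R} {a : R} (ha : a ∈ I) (u : Fin 2 → R) :
    a • u ∈ I • (⊤ : Submodule R (Fin 2 → R)) :=
  Submodule.smul_mem_smul ha Submodule.mem_top

theorem stmt2 [IsNoetherianRing R] [IsLocalRing R] [IsDomain R]
    (hdim : ringKrullDim R = 2)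
    (hreg : ∃ x y : R, maximalIdeal R = Ideal.span {x, y})
    (M : Submodule R (Fin 2 → R)) (hfg : M.FG)
    (hrk : minorsIdeal M ≠ ⊥)
    (hsub : M ≤ (maximalIdeal R) • (⊤ : Submodule R (Fin 2 → R)))
    (hic : IsIntClMod M) :
    ((maximalIdeal R) • (⊤ : Submodule R (Fin 2 → R)) ≤ M ↔
        maximalIdeal R ^ 2 ≤ minorsIdeal M) ∧
      (minorsIdeal M = maximalIdeal R ^ 2 →
        M = (maximalIdeal R) • (⊤ : Submodule R (Fin 2 → R))) := by
  set m := maximalIdeal R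
  have hfwd : (m • (⊤ : Submodule R (Fin 2 → R)) ≤ M) → m ^ 2 ≤ minorsIdeal M := by
    intro h
    rw [pow_two, Ideal.mul_le]
    intro a ha b hb
    have hv : a • ![1, 0] ∈ M := h (vec_mem_smul_top ha _)
    have hw : b • ![0, 1] ∈ M := h (vec_mem_smul_top hb _)
    refine Ideal.subset_span ⟨_, hv, _, hw, ?_⟩
    simp [det2]
  have hbwd : m ^ 2 ≤ minorsIdeal M → (m • (⊤ : Submodule R (Fin 2 → R)) ≤ M) := by
    intro h v hv
    apply hic
    intro w hw
    have hdet : det2 v w ∈ minorsIdeal M := by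
      apply h
      rw [pow_two]
      exact sub_mem
        (Ideal.mul_mem_mul (entry_mem_of_mem_smul_top hv 0)
          (entry_mem_of_mem_smul_top (hsub hw) 1))
        (Ideal.mul_mem_mul (entry_mem_of_mem_smul_top hv 1)
          (entry_mem_of_mem_smul_top (hsub hw) 0))
    refine ⟨1, one_pos, fun _ => -(det2 v w), ?_, ?_⟩
    · intro i h1 h2
      have : i = 1 := le_antisymm h2 h1
      subst this
      simpa using (minorsIdeal M).neg_mem hdet
    · simp
  refine ⟨⟨hfwd, hbwd⟩, fun heq => le_antisymm hsub (hbwd heq.ge)⟩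
end

section
/- Let (R, m) be a two-dimensional regular local ring and let (a,b,c) be a minimally 3-generated m-primary ideal with mc ⊆ (a,b). If the minimal free resolution of (a,b,c) is 0 → R^2 → R^3 → (a,b,c) → 0 with syzygy matrix having rows (p,q), (r,s), (t,u), then the ideal (t,u) equals m. -/
open IsLocalRing

variable {R : Type*} [CommRing R]

theorem stmt5 [IsNoetherianRing R] [IsLocalRing R] [IsDomain R]
    (hdim : ringKrullDim R = 2)
    (hreg : ∃ x y : R, maximalIdeal R = Ideal.span {x, y})
    (a b c : R) (hprim : (Ideal.span {a, b, c}).radical = maximalIdeal R)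
    (hmin3 : ¬ ∃ u v : R, Ideal.span {u, v} = Ideal.span {a, b, c})
    (hmc : maximalIdeal R * Ideal.span {c} ≤ Ideal.span {a, b})
    (p q r s t u : R)
    (hmem : p ∈ maximalIdeal R ∧ q ∈ maximalIdeal R ∧ r ∈ maximalIdeal R ∧
      s ∈ maximalIdeal R ∧ t ∈ maximalIdeal R ∧ u ∈ maximalIdeal R)
    (hrel1 : a * p + b * r + c * t = 0)
    (hrel2 : a * q + b * s + c * u = 0)
    (hker : ∀ z₁ z₂ z₃ : R, z₁ * a + z₂ * b + z₃ * c = 0 →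
      ∃ α β : R, z₁ = α * p + β * q ∧ z₂ = α * r + β * s ∧ z₃ = α * t + β * u) :
    Ideal.span {t, u} = maximalIdeal R := by
  apply le_antisymm
  · rw [Ideal.span_le]
    rintro x (rfl | rfl)
    · exact hmem.2.2.2.2.1
    · simpa using hmem.2.2.2.2.2
  · intro z hz
    have hzc : z * c ∈ Ideal.span {a, b} :=
      hmc (Ideal.mul_mem_mul hz (Ideal.subset_span rfl))
    rw [Ideal.mem_span_pair] at hzc
    obtain ⟨x, y, hxy⟩ := hzc
    obtain ⟨α, β, _, _, h3⟩ := hker (-x) (-y) z (by linear_combination -hxy)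
    rw [Ideal.mem_span_pair]
    exact ⟨α, β, h3.symm⟩
end

section
/- Let (R, m) be a two-dimensional regular local ring, J an integrally closed m-primary ideal, and I = mJ. Then (I : m) = J. -/
open IsLocalRing

variable {R : Type*} [CommRing R]

theorem stmt7 [IsNoetherianRing R] [IsLocalRing R] [IsDomain R]
    (hdim : ringKrullDim R = 2)
    (hreg : ∃ x y : R, maximalIdeal R = Ideal.span {x, y})
    (J : Ideal R) (hicl : IsIntClIdeal J) (hprim : J.radical = maximalIdeal R) :
    (maximalIdeal R * J).colon (maximalIdeal R) = J := by
  obtain ⟨x, y, hm⟩ := hreg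
  have hmne : maximalIdeal R ≠ ⊥ := by
    intro h
    have : IsField R := IsLocalRing.isField_iff_maximalIdeal_eq.mpr h
    have := ringKrullDim_eq_zero_of_isField this
    rw [this] at hdim
    exact absurd hdim (by norm_num)
  apply le_antisymm
  · intro r hr
    rw [Submodule.mem_colon] at hr
    have mem_iff : ∀ z : R, z ∈ maximalIdeal R * J →
        ∃ a ∈ J, ∃ b ∈ J, z = a * x + b * y := by
      intro z hz
      rw [hm, Ideal.span_insert, Ideal.sup_mul, Submodule.mem_sup] at hz
      obtain ⟨u, hu, v, hv, huv⟩ := hz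
      rw [Ideal.mem_span_singleton_mul] at hu hv
      obtain ⟨a, ha, rfl⟩ := hu
      obtain ⟨b, hb, rfl⟩ := hv
      exact ⟨a, ha, b, hb, by rw [← huv]; ring⟩
    have hxm : x ∈ maximalIdeal R := by
      rw [hm]; exact Ideal.subset_span (by simp)
    have hym : y ∈ maximalIdeal R := by
      rw [hm]; exact Ideal.subset_span (by simp)
    obtain ⟨a, ha, b, hb, hab⟩ := mem_iff _ (hr x hxm)
    obtain ⟨c, hc, d, hd, hcd⟩ := mem_iff _ (hr y hym)
    rw [smul_eq_mul] at hab hcd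
    by_cases hx : x = 0
    · by_cases hy : y = 0
      · exfalso; apply hmne; rw [hm, hx, hy]; simp
      · have h0 : (r - d) * y = 0 := by
          rw [hx] at hcd; linear_combination hcd
        rcases mul_eq_zero.mp h0 with h | h
        · rw [sub_eq_zero.mp h]; exact hd
        · exact absurd h hy
    · by_cases hy : y = 0
      · have h0 : (r - a) * x = 0 := by
          rw [hy] at hab; linear_combination hab
        rcases mul_eq_zero.mp h0 with h | h
        · rw [sub_eq_zero.mp h]; exact ha
        · exact absurd h hx
      · have h1 : (r - a) * x = b * y := by linear_combination hab
        have h2 : (r - d) * y = c * x := by linear_combination hcd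
        have h3 : ((r - a) * (r - d) - b * c) * (x * y) = 0 := by
          linear_combination ((r - d) * y) * h1 + (b * y) * h2
        have key : (r - a) * (r - d) - b * c = 0 := by
          rcases mul_eq_zero.mp h3 with h | h
          · exact h
          · rcases mul_eq_zero.mp h with h | h
            · exact absurd h hx
            · exact absurd h hy
        apply hicl
        refine ⟨2, by norm_num, fun i => if i = 1 then -(a + d) else a * d - b * c, ?_, ?_⟩
        · intro i h1i h2i
          interval_cases i
          · show (if (1:ℕ) = 1 then -(a + d) else a * d - b * c) ∈ J ^ 1
            rw [if_pos rfl, pow_one]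
            exact neg_mem (add_mem ha hd)
          · show (if (2:ℕ) = 1 then -(a + d) else a * d - b * c) ∈ J ^ 2
            rw [if_neg (by norm_num)]
            have h4 : a * d ∈ J ^ 2 := by rw [pow_two]; exact Ideal.mul_mem_mul ha hd
            have h5 : b * c ∈ J ^ 2 := by rw [pow_two]; exact Ideal.mul_mem_mul hb hc
            exact sub_mem h4 h5
        · have he : Finset.Icc 1 2 = ({1, 2} : Finset ℕ) := by decide
          rw [he]
          rw [Finset.sum_insert (by decide : (1:ℕ) ∉ ({2} : Finset ℕ)),
            Finset.sum_singleton]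
          norm_num
          linear_combination key
  · intro j hj
    rw [Submodule.mem_colon]
    intro s hs
    rw [smul_eq_mul]
    rw [mul_comm j s]
    exact Ideal.mul_mem_mul hs hj
end

section
/- Let (R, m) be a two-dimensional regular local ring, J an integrally closed m-primary ideal of order at least 2 with I = mJ integrally closed, and x, y elements with (x,y) = m and (I : y) = (I : m). Then the module M' generated by the columns of the 2 x (2μ(J)+1) matrix [[J, y, 0],[0, x, J]] (i.e., columns (j, 0) for j in J, the column (y, x), and columns (0, j) for j in J) is an integrally closed R-module of rank two with ideal of maximal minors I(M') = I. -/
open IsLocalRing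

variable {R : Type*} [CommRing R]

/-- The module generated by the columns of the matrix `[[J, y, 0], [0, x, J]]`. -/
def genMod (J : Ideal R) (x y : R) : Submodule R (Fin 2 → R) :=
  Submodule.span R
    ({v | ∃ j ∈ J, v = ![j, 0]} ∪ {![y, x]} ∪ {v | ∃ j ∈ J, v = ![0, j]})

/-!
Every element of `M' = genMod J x y` is `r • (y, x)` plus a vector with entries in `J`, which
gives `I(M') = xJ + yJ = mJ`. If `v` is integral over `M'`, the minor
`det (v, (y, x)) = x v₀ - y v₁` is integral over `mJ`, hence lies in `mJ`:
`x v₀ - y v₁ = x a + y b` with `a, b ∈ J`. As `dim R = 2`, Krull's principal ideal theorem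
makes `x, y` a regular sequence, so `v₁ + b = r x`, then `v₀ - a = r y`, and `v ∈ M'`.
-/

namespace IsLocalRing

theorem not_maximalIdeal_pow_le_span_singleton [IsNoetherianRing R] [IsLocalRing R]
    (hdim : 1 < ringKrullDim R) {x : R} (hx : x ∈ maximalIdeal R) (k : ℕ) :
    ¬ maximalIdeal R ^ k ≤ Ideal.span {x} := by
  intro hk
  have hmin : maximalIdeal R ∈ (Ideal.span {x}).minimalPrimes := by
    refine ⟨⟨inferInstance, (Ideal.span_singleton_le_iff_mem _).mpr hx⟩, ?_⟩
    rintro p ⟨hp, hxp⟩ -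
    exact fun z hz => hp.mem_of_pow_mem k (hk.trans hxp (Ideal.pow_mem_pow hz k))
  have hheight := Ideal.height_le_one_of_isPrincipal_of_mem_minimalPrimes _ _ hmin
  rw [← maximalIdeal_height_eq_ringKrullDim] at hdim
  exact absurd hheight (not_le.mpr (by exact_mod_cast hdim))

theorem eq_zero_of_mul_eq_zero_of_maximalIdeal_eq_span [IsNoetherianRing R] [IsLocalRing R]
    {t : R} (ht : maximalIdeal R = Ideal.span {t}) (hnil : ¬ IsNilpotent t) {c : R}
    (hc : t * c = 0) : c = 0 := by
  have hmem : ∀ n, c ∈ maximalIdeal R ^ n := by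
    intro n
    induction n with
    | zero => simp
    | succ n ih =>
      rw [ht, Ideal.span_singleton_pow, Ideal.mem_span_singleton'] at ih ⊢
      obtain ⟨d, rfl⟩ := ih
      -- `d` cannot be a unit, since `d * t ^ (n + 1) = t * c = 0` and `t` is not nilpotent
      have hd : d ∈ maximalIdeal R := by
        by_contra hd
        refine hnil ⟨n + 1, (notMem_maximalIdeal.mp hd).mul_right_eq_zero.mp ?_⟩
        linear_combination hc
      obtain ⟨e, rfl⟩ := Ideal.mem_span_singleton'.mp (ht ▸ hd)
      exact ⟨e, by ring⟩
  rw [← Submodule.mem_bot R,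
    ← Ideal.iInf_pow_eq_bot_of_isLocalRing _ (maximalIdeal.isMaximal R).ne_top]
  exact Submodule.mem_iInf _ |>.mpr hmem

end IsLocalRing

section SpanPair

variable [IsNoetherianRing R] [IsLocalRing R] {x y : R}

theorem IsLocalRing.ne_zero_of_span_pair_eq_maximalIdeal (hdim : 1 < ringKrullDim R)
    (hxy : Ideal.span {x, y} = maximalIdeal R) : x ≠ 0 := by
  rintro rfl
  have hm : maximalIdeal R = Ideal.span {y} := by
    rw [← hxy, Ideal.span_insert, Ideal.span_singleton_eq_bot.mpr rfl, bot_sup_eq]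
  exact not_maximalIdeal_pow_le_span_singleton hdim (hm ▸ Ideal.mem_span_singleton_self y) 1
    (by rw [pow_one, hm])

/-- `x, y` is a regular sequence. -/
theorem IsLocalRing.mem_span_singleton_of_mul_mem (hdim : 1 < ringKrullDim R)
    (hxy : Ideal.span {x, y} = maximalIdeal R) {c : R} (h : y * c ∈ Ideal.span {x}) :
    c ∈ Ideal.span {x} := by
  have hx : x ∈ maximalIdeal R := hxy ▸ Ideal.subset_span (by simp)
  let mk := Ideal.Quotient.mk (Ideal.span {x})
  have : Nontrivial (R ⧸ Ideal.span {x}) := Ideal.Quotient.nontrivial_iff.mpr fun htop =>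
    (maximalIdeal.isMaximal R).ne_top <|
      top_le_iff.mp (htop ▸ (Ideal.span_singleton_le_iff_mem _).mpr hx)
  have : IsLocalRing (R ⧸ Ideal.span {x}) := .of_surjective' mk Ideal.Quotient.mk_surjective
  have hmap : (maximalIdeal R).map mk = Ideal.span {mk y} := by
    rw [← hxy, Ideal.map_span, Set.image_insert_eq, Set.image_singleton,
      Ideal.Quotient.mk_singleton_self, Ideal.span_insert, Ideal.span_singleton_eq_bot.mpr rfl,
      bot_sup_eq]
  have hnil : ¬ IsNilpotent (mk y) := by
    rintro ⟨n, hn⟩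
    refine not_maximalIdeal_pow_le_span_singleton hdim hx n ?_
    rw [← Ideal.mk_ker (I := Ideal.span {x}), ← Ideal.map_eq_bot_iff_le_ker, Ideal.map_pow,
      hmap, Ideal.span_singleton_pow, hn, Ideal.span_singleton_eq_bot.mpr rfl]
  rw [← Ideal.Quotient.eq_zero_iff_mem]
  refine eq_zero_of_mul_eq_zero_of_maximalIdeal_eq_span ?_ hnil ?_
  · rw [← hmap, map_maximalIdeal_of_surjective mk Ideal.Quotient.mk_surjective]
  · rw [← map_mul]; exact Ideal.Quotient.eq_zero_iff_mem.mpr h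

end SpanPair

theorem Ideal.mem_span_pair_mul {x y z : R} {I : Ideal R} :
    z ∈ Ideal.span {x, y} * I ↔ ∃ a ∈ I, ∃ b ∈ I, x * a + y * b = z := by
  simp only [Ideal.span_insert, Ideal.sup_mul, Submodule.mem_sup, Ideal.mem_span_singleton_mul]
  aesop

section GenMod

variable {J : Ideal R} {x y : R}

theorem mem_genMod_iff {v : Fin 2 → R} :
    v ∈ genMod J x y ↔ ∃ r : R, v 0 - r * y ∈ J ∧ v 1 - r * x ∈ J := by
  constructor
  · intro hv
    induction hv using Submodule.span_induction with
    | mem v hv =>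
      rcases hv with (⟨j, hj, rfl⟩ | rfl) | ⟨j, hj, rfl⟩
      · exact ⟨0, by simpa using hj, by simp⟩
      · exact ⟨1, by simp, by simp⟩
      · exact ⟨0, by simp, by simpa using hj⟩
    | zero => exact ⟨0, by simp, by simp⟩
    | add v w _ _ hv hw =>
      obtain ⟨r, hr0, hr1⟩ := hv
      obtain ⟨s, hs0, hs1⟩ := hw
      refine ⟨r + s, ?_, ?_⟩
      · convert J.add_mem hr0 hs0 using 1; simp only [Pi.add_apply]; ring
      · convert J.add_mem hr1 hs1 using 1; simp only [Pi.add_apply]; ring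
    | smul c v _ hv =>
      obtain ⟨r, hr0, hr1⟩ := hv
      refine ⟨c * r, ?_, ?_⟩
      · convert J.mul_mem_left c hr0 using 1; simp only [Pi.smul_apply, smul_eq_mul]; ring
      · convert J.mul_mem_left c hr1 using 1; simp only [Pi.smul_apply, smul_eq_mul]; ring
  · rintro ⟨r, hr0, hr1⟩
    have hv : v = ![v 0 - r * y, 0] + r • ![y, x] + ![0, v 1 - r * x] := by
      ext i; fin_cases i <;> simp
    rw [hv]
    refine add_mem (add_mem ?_ (Submodule.smul_mem _ r ?_)) ?_ <;> apply Submodule.subset_span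
    · exact Or.inl (Or.inl ⟨_, hr0, rfl⟩)
    · exact Or.inl (Or.inr rfl)
    · exact Or.inr ⟨_, hr1, rfl⟩

theorem yx_mem_genMod : ![y, x] ∈ genMod J x y :=
  mem_genMod_iff.mpr ⟨1, by simp, by simp⟩

theorem minorsIdeal_genMod [IsLocalRing R] (hJ : J ≤ maximalIdeal R)
    (hxy : Ideal.span {x, y} = maximalIdeal R) :
    minorsIdeal (genMod J x y) = maximalIdeal R * J := by
  have hx : x ∈ maximalIdeal R := hxy ▸ Ideal.subset_span (by simp)
  have hy : y ∈ maximalIdeal R := hxy ▸ Ideal.subset_span (by simp)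
  apply le_antisymm
  · rw [minorsIdeal, Ideal.span_le]
    rintro _ ⟨v, hv, w, hw, rfl⟩
    obtain ⟨r, hr0, hr1⟩ := mem_genMod_iff.mp hv
    obtain ⟨s, hs0, hs1⟩ := mem_genMod_iff.mp hw
    have hdet : det2 v w = (v 0 - r * y) * (w 1 - s * x) - (v 1 - r * x) * (w 0 - s * y)
        + x * (s * (v 0 - r * y) - r * (w 0 - s * y))
        + y * (r * (w 1 - s * x) - s * (v 1 - r * x)) := by
      simp only [det2]; ring
    rw [hdet]
    refine add_mem (add_mem (sub_mem ?_ ?_) ?_) ?_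
    · exact Ideal.mul_mono_left hJ (Ideal.mul_mem_mul hr0 hs1)
    · exact Ideal.mul_mono_left hJ (Ideal.mul_mem_mul hr1 hs0)
    · exact Ideal.mul_mem_mul hx (sub_mem (J.mul_mem_left _ hr0) (J.mul_mem_left _ hs0))
    · exact Ideal.mul_mem_mul hy (sub_mem (J.mul_mem_left _ hs1) (J.mul_mem_left _ hr1))
  · rw [Ideal.mul_le]
    intro a ha j hj
    obtain ⟨b, c, rfl⟩ := Ideal.mem_span_pair.mp (hxy ▸ ha)
    have hxj : x * j ∈ minorsIdeal (genMod J x y) :=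
      Ideal.subset_span ⟨![j, 0], mem_genMod_iff.mpr ⟨0, by simpa, by simp⟩, ![y, x],
        yx_mem_genMod, by simp [det2, mul_comm]⟩
    have hyj : y * j ∈ minorsIdeal (genMod J x y) :=
      Ideal.subset_span ⟨![y, x], yx_mem_genMod, ![0, j],
        mem_genMod_iff.mpr ⟨0, by simp, by simpa⟩, by simp [det2]⟩
    rw [add_mul, mul_assoc, mul_assoc]
    exact add_mem (Ideal.mul_mem_left _ _ hxj) (Ideal.mul_mem_left _ _ hyj)

end GenMod

theorem isIntClMod_genMod [IsNoetherianRing R] [IsLocalRing R] [IsDomain R]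
    (hdim : 1 < ringKrullDim R) {J : Ideal R} (hJ : J ≤ maximalIdeal R)
    (hI : IsIntClIdeal (maximalIdeal R * J)) {x y : R}
    (hxy : Ideal.span {x, y} = maximalIdeal R) : IsIntClMod (genMod J x y) := by
  intro v hv
  have hdet : det2 v ![y, x] ∈ maximalIdeal R * J :=
    hI _ (minorsIdeal_genMod hJ hxy ▸ hv _ yx_mem_genMod)
  rw [← hxy, Ideal.mem_span_pair_mul] at hdet
  obtain ⟨a, ha, b, hb, hab⟩ := hdet
  simp only [det2, Matrix.cons_val_zero, Matrix.cons_val_one] at hab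
  obtain ⟨r, hr⟩ : ∃ r, r * x = v 1 + b := Ideal.mem_span_singleton'.mp <|
    IsLocalRing.mem_span_singleton_of_mul_mem hdim hxy <|
      Ideal.mem_span_singleton'.mpr ⟨v 0 - a, by linear_combination -hab⟩
  have hv0 : v 0 - r * y = a := mul_left_cancel₀
    (IsLocalRing.ne_zero_of_span_pair_eq_maximalIdeal hdim hxy)
    (by linear_combination -hab - y * hr)
  refine mem_genMod_iff.mpr ⟨r, hv0 ▸ ha, ?_⟩
  rw [show v 1 - r * x = -b by linear_combination -hr]
  exact J.neg_mem hb

theorem stmt8_general [IsNoetherianRing R] [IsLocalRing R] [IsDomain R]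
    (hdim : ringKrullDim R = 2)
    (J : Ideal R) (hprim : J.radical = maximalIdeal R)
    (hord : J ≤ maximalIdeal R ^ 2)
    (hIicl : IsIntClIdeal (maximalIdeal R * J))
    (x y : R) (hxy : Ideal.span {x, y} = maximalIdeal R) :
    IsIntClMod (genMod J x y) ∧
      minorsIdeal (genMod J x y) = maximalIdeal R * J ∧
      minorsIdeal (genMod J x y) ≠ ⊥ := by
  have hdim' : 1 < ringKrullDim R := by rw [hdim]; norm_num
  have hJ : J ≤ maximalIdeal R := hord.trans (Ideal.pow_le_self two_ne_zero)
  have hm : maximalIdeal R ≠ ⊥ := fun hm =>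
    IsLocalRing.ne_zero_of_span_pair_eq_maximalIdeal hdim' hxy <| by
      rw [← Submodule.mem_bot R, ← hm, ← hxy]; exact Ideal.subset_span (by simp)
  have hJ0 : J ≠ ⊥ := fun hJ0 => hm (by rw [← hprim, hJ0, Ideal.radical_bot_of_isReduced])
  refine ⟨isIntClMod_genMod hdim' hJ hIicl hxy, minorsIdeal_genMod hJ hxy, ?_⟩
  rw [minorsIdeal_genMod hJ hxy, Ne, Ideal.mul_eq_bot, not_or]
  exact ⟨hm, hJ0⟩

theorem stmt8 [IsNoetherianRing R] [IsLocalRing R] [IsDomain R]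
    [Infinite (ResidueField R)]
    (hdim : ringKrullDim R = 2)
    (hreg : ∃ x' y' : R, maximalIdeal R = Ideal.span {x', y'})
    (J : Ideal R) (hicl : IsIntClIdeal J) (hprim : J.radical = maximalIdeal R)
    (hord : J ≤ maximalIdeal R ^ 2)
    (hIicl : IsIntClIdeal (maximalIdeal R * J))
    (x y : R) (hxy : Ideal.span {x, y} = maximalIdeal R)
    (hcol : (maximalIdeal R * J).colon (Ideal.span {y}) =
      (maximalIdeal R * J).colon (maximalIdeal R)) :
    IsIntClMod (genMod J x y) ∧
      minorsIdeal (genMod J x y) = maximalIdeal R * J ∧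
      minorsIdeal (genMod J x y) ≠ ⊥ :=
  stmt8_general hdim J hprim hord hIicl x y hxy
end

section
/- Let (R, m) be a two-dimensional regular local ring with infinite residue field and I an integrally closed m-primary ideal with ord(I) >= 3. Then there exists an indecomposable integrally closed R-module M of rank two with I(M) = I. -/
open IsLocalRing

variable {R : Type*} [CommRing R]

set_option linter.unusedSectionVars false
set_option maxHeartbeats 1000000

/-- Symbolic-power-like ideal `{r | ∃ s ∉ q, s*r ∈ qⁿ}`. -/
def symbPow (q : Ideal R) (hq : q.IsPrime) (n : ℕ) : Ideal R where
  carrier := {r | ∃ s, s ∉ q ∧ s * r ∈ q ^ n}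
  add_mem' := by
    rintro a b ⟨s, hs, hsa⟩ ⟨s', hs', hsb⟩
    refine ⟨s * s', fun hss => hs ((hq.mem_or_mem hss).resolve_right hs'), ?_⟩
    have : s * s' * (a + b) = s' * (s * a) + s * (s' * b) := by ring
    rw [this]
    exact Ideal.add_mem _ (Ideal.mul_mem_left _ _ hsa) (Ideal.mul_mem_left _ _ hsb)
  zero_mem' := ⟨1, (Ideal.ne_top_iff_one q).1 hq.ne_top, by simp⟩
  smul_mem' := by
    rintro c a ⟨s, hs, hsa⟩
    refine ⟨s, hs, ?_⟩
    rw [smul_eq_mul, show s * (c * a) = c * (s * a) by ring]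
    exact Ideal.mul_mem_left _ _ hsa


section Stmt10Aux
variable [IsNoetherianRing R] [IsLocalRing R] [IsDomain R]

lemma aux_nak_le (J N : Ideal R) (h : N ≤ J ⊔ maximalIdeal R * N) : N ≤ J := by
  have hmap : Submodule.map J.mkQ (N : Submodule R R) ≤
      (maximalIdeal R) • (Submodule.map J.mkQ (N : Submodule R R)) := by
    rintro _ ⟨a, ha, rfl⟩
    obtain ⟨u, hu, v, hv, huv⟩ := Submodule.mem_sup.1 (h ha)
    have h1 : J.mkQ a = J.mkQ v := by
      rw [← huv, map_add]
      have : J.mkQ u = 0 := by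
        rwa [Submodule.mkQ_apply, Submodule.Quotient.mk_eq_zero]
      rw [this, zero_add]
    rw [h1]
    have : v ∈ (maximalIdeal R) • (N : Submodule R R) := by
      rwa [Ideal.smul_eq_mul]
    have := Submodule.map_smul'' (maximalIdeal R) (N : Submodule R R) J.mkQ ▸
      Submodule.mem_map_of_mem (f := J.mkQ) this
    exact this
  have hbot : Submodule.map J.mkQ (N : Submodule R R) = ⊥ :=
    Submodule.eq_bot_of_le_smul_of_le_jacobson_bot (maximalIdeal R) _
      ((IsNoetherian.noetherian N).map _) hmap
      (IsLocalRing.maximalIdeal_le_jacobson ⊥)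
  intro a ha
  have : J.mkQ a ∈ Submodule.map J.mkQ (N : Submodule R R) :=
    Submodule.mem_map_of_mem (f := J.mkQ) ha
  rw [hbot, Submodule.mem_bot, Submodule.mkQ_apply, Submodule.Quotient.mk_eq_zero] at this
  exact this


lemma aux_exists_chain (hdim : ringKrullDim R = 2) :
    ∃ q : Ideal R, q.IsPrime ∧ q ≠ ⊥ ∧ q < maximalIdeal R := by
  by_contra hcon
  push_neg at hcon
  have hle : ringKrullDim R ≤ 1 := by
    unfold ringKrullDim Order.krullDim
    apply iSup_le
    intro p
    have hlen : p.length ≤ 1 := by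
      by_contra hl
      push_neg at hl
      have h2 : 2 ≤ p.length := hl
      have l01 : (⟨0, by omega⟩ : Fin (p.length + 1)) < ⟨1, by omega⟩ :=
        Fin.mk_lt_mk.2 (by omega)
      have l12 : (⟨1, by omega⟩ : Fin (p.length + 1)) < ⟨2, by omega⟩ :=
        Fin.mk_lt_mk.2 (by omega)
      have h01 : p.toFun ⟨0, by omega⟩ < p.toFun ⟨1, by omega⟩ := p.strictMono l01
      have h12 : p.toFun ⟨1, by omega⟩ < p.toFun ⟨2, by omega⟩ := p.strictMono l12
      have hqb : (p.toFun ⟨1, by omega⟩).asIdeal ≠ ⊥ := by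
        intro hb
        have h01' : (p.toFun ⟨0, by omega⟩).asIdeal < (p.toFun ⟨1, by omega⟩).asIdeal := h01
        rw [hb] at h01'
        exact not_lt_bot h01'
      have hqm : (p.toFun ⟨1, by omega⟩).asIdeal < maximalIdeal R := by
        have h12' : (p.toFun ⟨1, by omega⟩).asIdeal < (p.toFun ⟨2, by omega⟩).asIdeal := h12
        exact lt_of_lt_of_le h12' (le_maximalIdeal (p.toFun ⟨2, by omega⟩).isPrime.ne_top)
      exact hcon _ (p.toFun ⟨1, by omega⟩).isPrime hqb hqm
    calc (p.length : WithBot ℕ∞) ≤ (1 : ℕ) := by exact_mod_cast hlen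
    _ = (1 : WithBot ℕ∞) := by norm_num
  rw [hdim] at hle
  norm_num at hle


lemma aux_not_principal (hdim : ringKrullDim R = 2) (t : R) :
    maximalIdeal R ≠ Ideal.span {t} := by
  intro hmt
  obtain ⟨q, hq, hqbot, hqlt⟩ := aux_exists_chain hdim
  apply hqbot
  have htq : t ∉ q := by
    intro h
    have : maximalIdeal R ≤ q := by
      rw [hmt, Ideal.span_le, Set.singleton_subset_iff]; exact h
    exact absurd (lt_of_lt_of_le hqlt this) (lt_irrefl q)
  have hle : q ≤ ⊥ ⊔ maximalIdeal R * q := by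
    intro a ha
    have ham : a ∈ maximalIdeal R := le_of_lt hqlt ha
    rw [hmt, Ideal.mem_span_singleton] at ham
    obtain ⟨c, rfl⟩ := ham
    have hc : c ∈ q := ((hq.mem_or_mem ha).resolve_left htq)
    exact Submodule.mem_sup_right
      (Ideal.mul_mem_mul (hmt ▸ Ideal.mem_span_singleton_self t) hc)
  exact le_bot_iff.1 (aux_nak_le ⊥ q hle)


lemma aux_ynilp (hdim : ringKrullDim R = 2) (x y : R)
    (hm : maximalIdeal R = Ideal.span {x, y}) :
    ∀ j, y ^ j ∉ Ideal.span {x} := by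
  classical
  intro j hj
  have hxm : x ∈ maximalIdeal R := hm ▸ Ideal.subset_span (by simp)
  have hym : y ∈ maximalIdeal R := hm ▸ Ideal.subset_span (by simp)
  have hmne : maximalIdeal R ≠ ⊤ := (maximalIdeal.isMaximal R).ne_top
  have hex : ∃ t, y ^ t ∈ Ideal.span {x} := ⟨j, hj⟩
  set t := Nat.find hex with htdef
  have ht : y ^ t ∈ Ideal.span {x} := Nat.find_spec hex
  have ht0 : t ≠ 0 := by
    intro h0
    rw [h0, pow_zero] at ht
    have htop : Ideal.span ({x} : Set R) = ⊤ := Ideal.eq_top_of_isUnit_mem _ ht isUnit_one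
    have : (⊤ : Ideal R) ≤ maximalIdeal R :=
      htop ▸ (Ideal.span_le.2 (Set.singleton_subset_iff.2 hxm))
    exact hmne (top_le_iff.1 this)
  -- every element outside (x) is c*x + d*y^k with d a unit, k < t
  have class_elt : ∀ a : R, a ∉ Ideal.span {x} →
      ∃ k, k < t ∧ ∃ c d : R, d ∉ maximalIdeal R ∧ a = c * x + d * y ^ k := by
    intro a ha
    have hexK : ∃ K, a ∉ Ideal.span {x} ⊔ Ideal.span {y ^ K} := by
      refine ⟨t, ?_⟩
      have hyt : Ideal.span {y ^ t} ≤ Ideal.span {x} :=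
        Ideal.span_le.2 (Set.singleton_subset_iff.2 ht)
      rw [sup_eq_left.2 hyt]
      exact ha
    set K := Nat.find hexK with hKdef
    have hKspec : a ∉ Ideal.span {x} ⊔ Ideal.span {y ^ K} := Nat.find_spec hexK
    have hK0 : K ≠ 0 := by
      intro h0
      rw [h0] at hKspec
      exact hKspec (by simp [Ideal.span_singleton_one])
    obtain ⟨k, hkK⟩ : ∃ k, K = k + 1 := ⟨K - 1, by omega⟩
    have hmem : a ∈ Ideal.span {x} ⊔ Ideal.span {y ^ k} := by
      by_contra hmm2
      have := Nat.find_min' hexK hmm2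
      omega
    have hKnot : a ∉ Ideal.span {x} ⊔ Ideal.span {y ^ (k + 1)} := hkK ▸ hKspec
    obtain ⟨u, hu, v, hv, huv⟩ := Submodule.mem_sup.1 hmem
    obtain ⟨c, rfl⟩ := Ideal.mem_span_singleton'.1 hu
    obtain ⟨d, rfl⟩ := Ideal.mem_span_singleton'.1 hv
    have hKt : K ≤ t := by
      apply Nat.find_min' hexK
      have hyt : Ideal.span {y ^ t} ≤ Ideal.span {x} :=
        Ideal.span_le.2 (Set.singleton_subset_iff.2 ht)
      rw [sup_eq_left.2 hyt]
      exact ha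
    refine ⟨k, by omega, c, d, ?_, huv.symm⟩
    intro hdm
    apply hKnot
    rw [hm] at hdm
    obtain ⟨α, β, hαβ⟩ := Ideal.mem_span_pair.1 hdm
    have hrw : a = (c + α * y ^ k) * x + β * y ^ (k + 1) := by
      rw [← huv, ← hαβ]; ring
    rw [hrw]
    exact Submodule.add_mem _
      (Submodule.mem_sup_left (Ideal.mem_span_singleton'.2 ⟨c + α * y ^ k, rfl⟩))
      (Submodule.mem_sup_right (Ideal.mem_span_singleton'.2 ⟨β, rfl⟩))
  -- every ideal containing (x) is (x) ⊔ (y^k)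
  have class_ideal : ∀ Jid : Ideal R, Ideal.span {x} ≤ Jid →
      ∃ k, k ≤ t ∧ Jid = Ideal.span {x} ⊔ Ideal.span {y ^ k} := by
    intro Jid hJ
    have hexk : ∃ k, y ^ k ∈ Jid := ⟨t, hJ ht⟩
    set k0 := Nat.find hexk with hk0def
    have hk0mem : y ^ k0 ∈ Jid := Nat.find_spec hexk
    have hk0t : k0 ≤ t := Nat.find_min' hexk (hJ ht)
    refine ⟨k0, hk0t, le_antisymm ?_ ?_⟩
    · intro a haJ
      by_cases hax : a ∈ Ideal.span {x}
      · exact Submodule.mem_sup_left hax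
      · obtain ⟨k, hkt, c, d, hdm, hadec⟩ := class_elt a hax
        have hdy : d * y ^ k ∈ Jid := by
          have : d * y ^ k = a - c * x := by rw [hadec]; ring
          rw [this]
          exact Submodule.sub_mem _ haJ (Ideal.mul_mem_left _ _ (hJ (Ideal.mem_span_singleton_self x)))
        have hdu : IsUnit d := by
          by_contra hdu
          exact hdm ((IsLocalRing.mem_maximalIdeal d).2 hdu)
        obtain ⟨d', hd'⟩ := hdu.exists_left_inv
        have hyk : y ^ k ∈ Jid := by
          have : y ^ k = d' * (d * y ^ k) := by rw [← mul_assoc, hd', one_mul]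
          rw [this]
          exact Ideal.mul_mem_left _ _ hdy
        have hkk0 : k0 ≤ k := Nat.find_min' hexk hyk
        have hda : a = c * x + (d * y ^ (k - k0)) * y ^ k0 := by
          rw [hadec, mul_assoc, ← pow_add]
          congr 3
          omega
        rw [hda]
        exact Submodule.add_mem _
          (Submodule.mem_sup_left (Ideal.mem_span_singleton'.2 ⟨c, rfl⟩))
          (Submodule.mem_sup_right (Ideal.mem_span_singleton'.2 ⟨d * y ^ (k - k0), rfl⟩))
    · refine sup_le hJ (Ideal.span_le.2 (Set.singleton_subset_iff.2 hk0mem))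
  -- a prime strictly between ⊥ and m
  obtain ⟨q, hq, hqbot, hqlt⟩ := aux_exists_chain hdim
  have hxq : x ∉ q := by
    intro hxq'
    have hyq : y ∈ q := hq.mem_of_pow_mem t
      ((Ideal.span_le.2 (Set.singleton_subset_iff.2 hxq')) ht)
    have hrad : maximalIdeal R ≤ q := by
      rw [hm, Ideal.span_le]
      intro z hz
      rcases hz with h | h
      · exact h ▸ hxq'
      · exact (Set.mem_singleton_iff.1 h) ▸ hyq
    exact absurd (lt_of_lt_of_le hqlt hrad) (lt_irrefl _)
  set Q : ℕ → Ideal R := symbPow q hq with hQdef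
  have hQmem : ∀ n (r : R), r ∈ Q n ↔ ∃ s, s ∉ q ∧ s * r ∈ q ^ n := fun n r => Iff.rfl
  have hQmono : ∀ n, Q (n + 1) ≤ Q n := by
    rintro n r ⟨s, hs, hsr⟩
    exact ⟨s, hs, Ideal.pow_le_pow_right (by omega) hsr⟩
  have hQanti : ∀ i j, i ≤ j → Q j ≤ Q i := by
    intro i j hij
    induction j with
    | zero => rw [Nat.le_zero.1 hij]
    | succ n ih =>
      rcases Nat.lt_or_ge i (n + 1) with h | h
      · exact le_trans (hQmono n) (ih (by omega))
      · have : i = n + 1 := by omega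
        rw [this]
  -- pigeonhole on the ideals (x) ⊔ Q n
  have hWcl : ∀ n : ℕ, ∃ k, k ≤ t ∧
      Ideal.span {x} ⊔ Q n = Ideal.span {x} ⊔ Ideal.span {y ^ k} :=
    fun n => class_ideal _ le_sup_left
  choose kf hkf1 hkf2 using hWcl
  have hpigeon : ∃ N : ℕ, Ideal.span {x} ⊔ Q N = Ideal.span {x} ⊔ Q (N + 1) := by
    have hcard : Fintype.card (Fin (t + 1)) < Fintype.card (Fin (t + 2)) := by simp
    obtain ⟨n, n', hne, heq⟩ := Fintype.exists_ne_map_eq_of_card_lt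
      (fun n : Fin (t + 2) => (⟨kf n.1, by have := hkf1 n.1; omega⟩ : Fin (t + 1))) hcard
    have hkeq : kf n.1 = kf n'.1 := by
      have := congrArg Fin.val heq
      simpa using this
    have hWeq : ∀ a b : ℕ, a < b → kf a = kf b →
        Ideal.span {x} ⊔ Q a = Ideal.span {x} ⊔ Q (a + 1) := by
      intro a b hab hk
      have h3 : Ideal.span {x} ⊔ Q a = Ideal.span {x} ⊔ Q b := by
        rw [hkf2 a, hkf2 b, hk]
      apply le_antisymm
      · calc Ideal.span {x} ⊔ Q a = Ideal.span {x} ⊔ Q b := h3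
          _ ≤ Ideal.span {x} ⊔ Q (a + 1) :=
            sup_le_sup_left (hQanti (a + 1) b (by omega)) _
      · exact sup_le_sup_left (hQmono a) _
    rcases lt_trichotomy n.1 n'.1 with h | h | h
    · exact ⟨n.1, hWeq n.1 n'.1 h hkeq⟩
    · exact absurd (Fin.ext h) hne
    · exact ⟨n'.1, hWeq n'.1 n.1 h hkeq.symm⟩
  obtain ⟨N, hN⟩ := hpigeon
  have hQle : Q N ≤ Q (N + 1) := by
    apply aux_nak_le (Q (N + 1)) (Q N)
    intro a ha
    have haW : a ∈ Ideal.span {x} ⊔ Q (N + 1) := by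
      rw [← hN]; exact Submodule.mem_sup_right ha
    obtain ⟨u, hu, v, hv, huv⟩ := Submodule.mem_sup.1 haW
    obtain ⟨c, rfl⟩ := Ideal.mem_span_singleton'.1 hu
    have hcx : c * x ∈ Q N := by
      have hcv : c * x = a - v := by rw [← huv]; ring
      rw [hcv]
      exact Submodule.sub_mem _ ha (hQmono N hv)
    obtain ⟨s, hs, hscx⟩ := hcx
    have hc : c ∈ Q N := by
      refine ⟨s * x, fun hssx => hs ((hq.mem_or_mem hssx).resolve_right hxq), ?_⟩
      rw [show s * x * c = s * (c * x) by ring]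
      exact hscx
    rw [← huv]
    exact Submodule.add_mem _
      (Submodule.mem_sup_right (by rw [mul_comm c x]; exact Ideal.mul_mem_mul hxm hc))
      (Submodule.mem_sup_left hv)
  -- localize at q and apply Nakayama there
  haveI hqI := hq
  have h1q : (1 : R) ∉ q := (Ideal.ne_top_iff_one q).1 hq.ne_top
  set L := Localization.AtPrime q with hLdef
  set f := algebraMap R L with hfdef
  have hmaple : Ideal.map f (q ^ N) ≤ Ideal.map f (q ^ (N + 1)) := by
    rw [Ideal.map_le_iff_le_comap]
    intro r hr
    have hrQ : r ∈ Q (N + 1) := hQle ⟨1, h1q, by simpa using hr⟩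
    obtain ⟨s, hs, hsr⟩ := hrQ
    have hmem : f (s * r) ∈ Ideal.map f (q ^ (N + 1)) := Ideal.mem_map_of_mem f hsr
    have hu : IsUnit (f s) := IsLocalization.map_units L (⟨s, hs⟩ : q.primeCompl)
    rw [Ideal.mem_comap]
    obtain ⟨w, hw⟩ := hu.exists_left_inv
    have hfr : f r = w * f (s * r) := by
      rw [map_mul, ← mul_assoc, hw, one_mul]
    rw [hfr]
    exact Ideal.mul_mem_left _ _ hmem
  haveI hLnoeth : IsNoetherianRing L :=
    IsLocalization.isNoetherianRing q.primeCompl L inferInstance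
  have hPbot : Ideal.map f q ^ N = ⊥ := by
    apply Submodule.eq_bot_of_le_smul_of_le_jacobson_bot (Ideal.map f q) _
      (IsNoetherian.noetherian _)
    · rw [Ideal.smul_eq_mul, ← pow_succ']
      rw [← Ideal.map_pow, ← Ideal.map_pow]
      exact hmaple
    · rw [Localization.AtPrime.map_eq_maximalIdeal]
      exact IsLocalRing.maximalIdeal_le_jacobson ⊥
  obtain ⟨u, huq, hune⟩ := Submodule.ne_bot_iff q |>.1 hqbot
  have hfu : f (u ^ N) = 0 := by
    have hmem : f (u ^ N) ∈ Ideal.map f (q ^ N) :=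
      Ideal.mem_map_of_mem f (Ideal.pow_mem_pow huq N)
    rw [Ideal.map_pow, hPbot] at hmem
    simpa using hmem
  obtain ⟨s, hs⟩ := (IsLocalization.map_eq_zero_iff q.primeCompl L _).1 hfu
  have hsne : (s : R) ≠ 0 := fun h0 => s.2 (h0 ▸ q.zero_mem)
  have huN : u ^ N = 0 := by
    rcases mul_eq_zero.1 hs with h | h
    · exact absurd h hsne
    · exact h
  rcases Nat.eq_zero_or_pos N with h0 | hpos
  · rw [h0, pow_zero] at huN
    exact one_ne_zero huN
  · exact hune (pow_eq_zero_iff (by omega)|>.1 huN)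


variable (hdim : ringKrullDim R = 2) (x y : R) (hm : maximalIdeal R = Ideal.span {x, y})

omit hdim in
include hm in
lemma aux_xmem : x ∈ maximalIdeal R := hm ▸ Ideal.subset_span (by simp)

omit hdim in
include hm in
lemma aux_ymem : y ∈ maximalIdeal R := hm ▸ Ideal.subset_span (by simp)

include hdim hm

lemma aux_xne : x ≠ 0 := by
  intro h0
  apply aux_not_principal hdim y
  rw [hm, h0]
  show Ideal.span (insert (0:R) {y}) = Ideal.span {y}
  exact Submodule.span_insert_zero

lemma aux_yne : y ≠ 0 := by
  intro h0
  apply aux_not_principal hdim x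
  rw [hm, h0, Ideal.span_pair_comm]
  show Ideal.span (insert (0:R) {x}) = Ideal.span {x}
  exact Submodule.span_insert_zero

lemma aux_xdvd : ∀ (j : ℕ) (a : R), x ∣ a * y ^ j → x ∣ a := by
  classical
  have hyn := aux_ynilp hdim x y hm
  intro j a h
  by_contra ha
  have hxm : x ∈ maximalIdeal R := aux_xmem x y hm
  have hmne : maximalIdeal R ≠ ⊤ := (maximalIdeal.isMaximal R).ne_top
  set Jx := Ideal.span {x} with hJxdef
  have hxne : Jx ≠ ⊤ := by
    intro htop
    apply hmne
    apply top_le_iff.1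
    rw [← htop]
    exact Ideal.span_le.2 (Set.singleton_subset_iff.2 hxm)
  haveI : Nontrivial (R ⧸ Jx) := Ideal.Quotient.nontrivial_iff.mpr hxne
  haveI : IsLocalRing (R ⧸ Jx) :=
    IsLocalRing.of_surjective' (Ideal.Quotient.mk Jx) Ideal.Quotient.mk_surjective
  set π := Ideal.Quotient.mk Jx with hπdef
  have hkey : ∀ r : R, π r = 0 ↔ x ∣ r := fun r => by
    rw [hπdef, Ideal.Quotient.eq_zero_iff_mem, hJxdef, Ideal.mem_span_singleton]
  have hπx : π x = 0 := (hkey x).2 dvd_rfl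
  have hya : π a ≠ 0 := fun h0 => ha ((hkey a).1 h0)
  have hunit : ∀ c : R, π c ∉ Ideal.span {π y} → IsUnit (π c) := by
    intro c hc
    by_contra hcu
    apply hc
    have hcm : c ∈ maximalIdeal R := by
      by_contra hcm
      have : IsUnit c := by
        by_contra hcu2
        exact hcm ((IsLocalRing.mem_maximalIdeal c).2 hcu2)
      exact hcu (this.map π)
    rw [hm] at hcm
    obtain ⟨α, β, hαβ⟩ := Ideal.mem_span_pair.1 hcm
    have : π c = π β * π y := by
      rw [← hαβ]
      simp only [map_add, map_mul, hπx]
      ring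
    rw [this]
    exact Ideal.mem_span_singleton'.2 ⟨π β, rfl⟩
  have hyune : Ideal.span {π y} ≠ ⊤ := by
    intro htop
    rw [Ideal.span_singleton_eq_top] at htop
    obtain ⟨c, hc⟩ := htop.exists_left_inv
    obtain ⟨c', rfl⟩ := Ideal.Quotient.mk_surjective c
    have h1 : π (c' * y - 1) = 0 := by
      simp only [map_sub, map_mul, map_one]
      rw [hc, sub_self]
    obtain ⟨d, hd⟩ := (hkey _).1 h1
    have hone : (1 : R) ∈ maximalIdeal R := by
      have : (1 : R) = c' * y - x * d := by rw [← hd]; ring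
      rw [this]
      exact Submodule.sub_mem _ (Ideal.mul_mem_left _ _ (aux_ymem x y hm))
        (Ideal.mul_mem_right _ _ hxm)
    exact hmne (Ideal.eq_top_of_isUnit_mem _ hone isUnit_one)
  have hKrull := Ideal.iInf_pow_eq_bot_of_isLocalRing (I := Ideal.span {π y}) hyune
  have hexK : ∃ K, π a ∉ Ideal.span {π y} ^ K := by
    by_contra hall
    push_neg at hall
    apply hya
    have : π a ∈ ⨅ i : ℕ, Ideal.span {π y} ^ i := Submodule.mem_iInf _ |>.2 hall
    rw [hKrull] at this
    simpa using this
  set K := Nat.find hexK with hKdef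
  have hKspec : π a ∉ Ideal.span {π y} ^ K := Nat.find_spec hexK
  have hK0 : K ≠ 0 := by
    intro h0
    rw [h0, pow_zero] at hKspec
    exact hKspec (by simp [Ideal.one_eq_top])
  obtain ⟨k, hkK⟩ : ∃ k, K = k + 1 := ⟨K - 1, by omega⟩
  have hmem : π a ∈ Ideal.span {π y} ^ k := by
    by_contra hmm2
    have := Nat.find_min' hexK hmm2
    omega
  rw [Ideal.span_singleton_pow] at hmem
  obtain ⟨c, hc⟩ := Ideal.mem_span_singleton'.1 hmem
  have hcny : c ∉ Ideal.span {π y} := by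
    intro hcy
    obtain ⟨c₂, hc₂⟩ := Ideal.mem_span_singleton'.1 hcy
    apply hKspec
    rw [hkK, Ideal.span_singleton_pow]
    refine Ideal.mem_span_singleton'.2 ⟨c₂, ?_⟩
    rw [← hc, ← hc₂]
    ring
  obtain ⟨c', rfl⟩ := Ideal.Quotient.mk_surjective c
  have hcu : IsUnit (π c') := hunit c' hcny
  have hzero : π c' * (π y) ^ (k + j) = 0 := by
    have h0 : π (a * y ^ j) = 0 := (hkey _).2 h
    have : π a * (π y) ^ j = 0 := by
      rw [← h0]
      simp [map_mul, map_pow]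
    calc π c' * (π y) ^ (k + j) = (π c' * (π y) ^ k) * (π y) ^ j := by ring
      _ = π a * (π y) ^ j := by rw [hc]
      _ = 0 := this
  obtain ⟨w, hw⟩ := hcu.exists_left_inv
  have hyz : (π y) ^ (k + j) = 0 := by
    calc (π y) ^ (k + j) = w * (π c' * (π y) ^ (k + j)) := by
          rw [← mul_assoc, hw, one_mul]
      _ = 0 := by rw [hzero, mul_zero]
  have : π (y ^ (k + j)) = 0 := by rw [map_pow]; exact hyz
  exact hyn (k + j) (Ideal.mem_span_singleton.2 ((hkey _).1 this))

lemma aux_xpow_dvd_of_dvd_mul_y :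
    ∀ (k : ℕ) (a : R), x ^ k ∣ a * y → x ^ k ∣ a := by
  intro k
  induction k with
  | zero => intro a _; simpa using one_dvd a
  | succ n ih =>
    intro a h
    obtain ⟨d, hd⟩ := h
    have h1 : x ∣ a * y ^ 1 := ⟨x ^ n * d, by rw [pow_one, hd]; ring⟩
    obtain ⟨a', rfl⟩ := aux_xdvd hdim x y hm 1 a h1
    have hx0 : x ≠ 0 := aux_xne hdim x y hm
    have h2 : a' * y = x ^ n * d := by
      apply mul_left_cancel₀ hx0
      rw [show x * (a' * y) = x * a' * y by ring, hd]
      ring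
    obtain ⟨e, he⟩ := ih a' ⟨d, h2⟩
    exact ⟨e, by rw [he]; ring⟩

lemma aux_xkyk : ∀ (k : ℕ) (a b : R), a * y ^ k = b * x ^ k → x ^ k ∣ a := by
  intro k
  induction k with
  | zero => intro a b _; simpa using one_dvd a
  | succ n ih =>
    intro a b h
    have h1 : x ∣ a * y ^ (n + 1) := ⟨b * x ^ n, by rw [h]; ring⟩
    obtain ⟨a', rfl⟩ := aux_xdvd hdim x y hm (n + 1) a h1
    have hx0 : x ≠ 0 := aux_xne hdim x y hm
    have h2 : (a' * y) * y ^ n = b * x ^ n := by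
      apply mul_left_cancel₀ hx0
      rw [show x * (a' * y * y ^ n) = x * a' * y ^ (n+1) by ring, h]
      ring
    obtain ⟨e, he⟩ := aux_xpow_dvd_of_dvd_mul_y hdim x y hm n a' (ih (a' * y) b h2)
    exact ⟨e, by rw [he]; ring⟩


lemma aux_GR1 {a b : R} (h : a * x + b * y ∈ maximalIdeal R ^ 2) :
    a ∈ maximalIdeal R ∧ b ∈ maximalIdeal R := by
  rw [pow_two] at h
  constructor
  · by_contra ha
    have hau : IsUnit a := by
      by_contra h2
      exact ha ((IsLocalRing.mem_maximalIdeal a).2 h2)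
    obtain ⟨a', ha'⟩ := hau.exists_left_inv
    have hx : x ∈ Ideal.span {y} ⊔ maximalIdeal R * maximalIdeal R := by
      have hxeq : x = a' * (a * x + b * y) - (a' * b) * y := by
        calc x = (a' * a) * x := by rw [ha', one_mul]
          _ = a' * (a * x + b * y) - (a' * b) * y := by ring
      rw [hxeq]
      exact Submodule.sub_mem _
        (Submodule.mem_sup_right (Ideal.mul_mem_left _ _ h))
        (Submodule.mem_sup_left (Ideal.mem_span_singleton'.2 ⟨a' * b, rfl⟩))
    have hms : maximalIdeal R ≤ Ideal.span {y} ⊔ maximalIdeal R * maximalIdeal R := by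
      intro z hz
      rw [hm] at hz
      obtain ⟨α, β, hz2⟩ := Ideal.mem_span_pair.1 hz
      rw [← hz2]
      exact Submodule.add_mem _ (Ideal.mul_mem_left _ α hx)
        (Ideal.mul_mem_left _ β (Submodule.mem_sup_left (Ideal.mem_span_singleton_self y)))
    have hle := aux_nak_le (Ideal.span {y}) (maximalIdeal R) hms
    have : maximalIdeal R = Ideal.span {y} :=
      le_antisymm hle (Ideal.span_le.2 (Set.singleton_subset_iff.2 (aux_ymem x y hm)))
    exact aux_not_principal hdim y this
  · by_contra hb
    have hbu : IsUnit b := by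
      by_contra h2
      exact hb ((IsLocalRing.mem_maximalIdeal b).2 h2)
    obtain ⟨b', hb'⟩ := hbu.exists_left_inv
    have hy : y ∈ Ideal.span {x} ⊔ maximalIdeal R * maximalIdeal R := by
      have hyeq : y = b' * (a * x + b * y) - (b' * a) * x := by
        calc y = (b' * b) * y := by rw [hb', one_mul]
          _ = b' * (a * x + b * y) - (b' * a) * x := by ring
      rw [hyeq]
      exact Submodule.sub_mem _
        (Submodule.mem_sup_right (Ideal.mul_mem_left _ _ h))
        (Submodule.mem_sup_left (Ideal.mem_span_singleton'.2 ⟨b' * a, rfl⟩))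
    have hms : maximalIdeal R ≤ Ideal.span {x} ⊔ maximalIdeal R * maximalIdeal R := by
      intro z hz
      rw [hm] at hz
      obtain ⟨α, β, hz2⟩ := Ideal.mem_span_pair.1 hz
      rw [← hz2]
      exact Submodule.add_mem _
        (Ideal.mul_mem_left _ α (Submodule.mem_sup_left (Ideal.mem_span_singleton_self x)))
        (Ideal.mul_mem_left _ β hy)
    have hle := aux_nak_le (Ideal.span {x}) (maximalIdeal R) hms
    have : maximalIdeal R = Ideal.span {x} :=
      le_antisymm hle (Ideal.span_le.2 (Set.singleton_subset_iff.2 (aux_xmem x y hm)))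
    exact aux_not_principal hdim x this

lemma aux_m3_dec : maximalIdeal R ^ 3 ≤
    Ideal.span {x} * maximalIdeal R ^ 2 ⊔ Ideal.span {y ^ 3} := by
  set A := Ideal.span ({x} : Set R) with hA
  set B := Ideal.span ({y} : Set R) with hB
  set m := maximalIdeal R with hmm2
  have hAB : m = A + B := by
    rw [hm, Ideal.span_insert, Ideal.add_eq_sup]
  have hBm : B ≤ m := Ideal.span_le.2 (Set.singleton_subset_iff.2 (aux_ymem x y hm))
  have hBmm : B * m ≤ m ^ 2 := by
    rw [pow_two]
    exact Ideal.mul_mono hBm le_rfl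
  have hBBm : B * B ≤ m ^ 2 := by
    rw [pow_two]
    exact Ideal.mul_mono hBm hBm
  have hBBB : B * B * B = Ideal.span {y ^ 3} := by
    rw [hB, Ideal.span_singleton_mul_span_singleton, Ideal.span_singleton_mul_span_singleton,
      show y * y * y = y ^ 3 by ring]
  have e1 : m ^ 3 = A * m ^ 2 + (B * A * m + (B * B * A + B * B * B)) := by
    conv_lhs => rw [hAB]
    conv_rhs => rw [hAB]
    ring
  rw [← Ideal.add_eq_sup, e1]
  have t1 : A * m ^ 2 ≤ A * m ^ 2 + Ideal.span {y ^ 3} := le_sup_left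
  have t2 : B * A * m ≤ A * m ^ 2 + Ideal.span {y ^ 3} := by
    apply le_sup_of_le_left
    calc B * A * m = A * (B * m) := by ring
      _ ≤ A * m ^ 2 := Ideal.mul_mono_right hBmm
  have t3 : B * B * A ≤ A * m ^ 2 + Ideal.span {y ^ 3} := by
    apply le_sup_of_le_left
    calc B * B * A = A * (B * B) := by ring
      _ ≤ A * m ^ 2 := Ideal.mul_mono_right hBBm
  have t4 : B * B * B ≤ A * m ^ 2 + Ideal.span {y ^ 3} := by
    rw [hBBB]
    exact le_sup_right
  rw [Ideal.add_eq_sup, Ideal.add_eq_sup, Ideal.add_eq_sup]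
  exact sup_le t1 (sup_le t2 (sup_le t3 t4))

lemma aux_L2 {a b c : R} (h : a * x ^ 2 + b * (x * y) + c * y ^ 2 ∈ maximalIdeal R ^ 3) :
    a ∈ maximalIdeal R ∧ b ∈ maximalIdeal R ∧ c ∈ maximalIdeal R := by
  have hdec := aux_m3_dec hdim x y hm h
  obtain ⟨u, hu, w, hw, huw⟩ := Submodule.mem_sup.1 hdec
  obtain ⟨s, hs, hsx⟩ := Ideal.mem_span_singleton_mul.1 hu
  obtain ⟨d, hd⟩ := Ideal.mem_span_singleton'.1 hw
  -- a x² + b x y + c y² = x*s + d*y³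
  have heq : a * x ^ 2 + b * (x * y) + c * y ^ 2 = x * s + d * y ^ 3 := by
    rw [hsx, hd, huw]
  have hxm : x ∈ maximalIdeal R := aux_xmem x y hm
  have hym : y ∈ maximalIdeal R := aux_ymem x y hm
  have hxdvd : x ∣ (c - d * y) * y ^ 2 := by
    refine ⟨s - a * x - b * y, ?_⟩
    have h0 : (c - d * y) * y ^ 2 - x * (s - a * x - b * y) = 0 := by
      have hh : (c - d * y) * y ^ 2 - x * (s - a * x - b * y)
          = (a * x ^ 2 + b * (x * y) + c * y ^ 2) - (x * s + d * y ^ 3) := by ring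
      rw [hh, heq, sub_self]
    exact (sub_eq_zero.1 h0)
  obtain ⟨e, he⟩ := aux_xdvd hdim x y hm 2 (c - d * y) hxdvd
  have hceq : c = x * e + d * y := by
    have : c - d * y = x * e := he
    linear_combination this
  have hc : c ∈ maximalIdeal R := by
    rw [hceq]
    exact Submodule.add_mem _ (Ideal.mul_mem_right e _ hxm) (Ideal.mul_mem_left _ d hym)
  have hx0 : x ≠ 0 := aux_xne hdim x y hm
  have h1 : x * (a * x + b * y + e * y ^ 2 - s) = 0 := by
    have hsub : x * (a * x + b * y + e * y ^ 2 - s)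
        = (a * x ^ 2 + b * (x * y) + c * y ^ 2) - (x * s + d * y ^ 3) := by
      rw [hceq]; ring
    rw [hsub, heq, sub_self]
  have h2 : a * x + b * y + e * y ^ 2 - s = 0 := by
    rcases mul_eq_zero.1 h1 with h' | h'
    · exact absurd h' hx0
    · exact h'
  have hab : a * x + b * y ∈ maximalIdeal R ^ 2 := by
    have habe : a * x + b * y = s - e * y ^ 2 := by linear_combination h2
    rw [habe]
    refine Submodule.sub_mem _ hs ?_
    rw [pow_two, show e * y ^ 2 = e * (y * y) by ring]
    exact Ideal.mul_mem_left _ e (Ideal.mul_mem_mul hym hym)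
  obtain ⟨ha, hb⟩ := aux_GR1 hdim x y hm hab
  exact ⟨ha, hb, hc⟩


end Stmt10Aux

theorem stmt10 [IsNoetherianRing R] [IsLocalRing R] [IsDomain R]
    [Infinite (ResidueField R)]
    (hdim : ringKrullDim R = 2)
    (hreg : ∃ x y : R, maximalIdeal R = Ideal.span {x, y})
    (I : Ideal R) (hicl : IsIntClIdeal I) (hprim : I.radical = maximalIdeal R)
    (hord : I ≤ maximalIdeal R ^ 3) :
    ∃ M : Submodule R (Fin 2 → R), M.FG ∧ minorsIdeal M ≠ ⊥ ∧
      IsIntClMod M ∧ IsIndecomposable M ∧ minorsIdeal M = I := by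
  classical
  obtain ⟨x, y, hm⟩ := hreg
  have hxm : x ∈ maximalIdeal R := aux_xmem x y hm
  have hym : y ∈ maximalIdeal R := aux_ymem x y hm
  have hx0 : x ≠ 0 := aux_xne hdim x y hm
  have hy0 : y ≠ 0 := aux_yne hdim x y hm
  have hxy0 : x * y ≠ 0 := mul_ne_zero hx0 hy0
  have hmne : maximalIdeal R ≠ ⊤ := (maximalIdeal.isMaximal R).ne_top
  have hone : (1 : R) ∉ maximalIdeal R := (Ideal.ne_top_iff_one _).1 hmne
  have hIm2 : I ≤ maximalIdeal R ^ 2 :=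
    le_trans hord (Ideal.pow_le_pow_right (by omega))
  -- the linear form ℓ v = v 0 * y - v 1 * x
  let ℓ : (Fin 2 → R) →ₗ[R] R :=
    { toFun := fun v => v 0 * y - v 1 * x
      map_add' := fun v w => by
        simp only [Pi.add_apply]
        ring
      map_smul' := fun c v => by
        simp only [Pi.smul_apply, smul_eq_mul, RingHom.id_apply]
        ring }
  have hℓ : ∀ v : Fin 2 → R, ℓ v = v 0 * y - v 1 * x := fun v => rfl
  set M := Submodule.comap ℓ I with hMdef
  have hmemM : ∀ v : Fin 2 → R, v ∈ M ↔ v 0 * y - v 1 * x ∈ I := fun v => Iff.rfl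
  set z₀ : Fin 2 → R := ![x, y] with hz₀def
  have hz₀0 : z₀ 0 = x := rfl
  have hz₀1 : z₀ 1 = y := rfl
  have hz₀M : z₀ ∈ M := by
    rw [hmemM, hz₀0, hz₀1]
    rw [show x * y - y * x = 0 by ring]
    exact I.zero_mem
  -- coordinates of members of M lie in m
  have hcoord : ∀ v : Fin 2 → R, v ∈ M → v 0 ∈ maximalIdeal R ∧ v 1 ∈ maximalIdeal R := by
    intro v hv
    have h2 : (-(v 1)) * x + (v 0) * y ∈ maximalIdeal R ^ 2 := by
      rw [show (-(v 1)) * x + (v 0) * y = v 0 * y - v 1 * x by ring]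
      exact hIm2 ((hmemM v).1 hv)
    obtain ⟨h1', h0'⟩ := aux_GR1 hdim x y hm h2
    exact ⟨h0', by rwa [neg_mem_iff] at h1'⟩
  -- I*m decomposition helper
  have hImdec : ∀ r : R, r * x ∈ I * maximalIdeal R →
      ∃ s ∈ I, ∃ t ∈ I, r * x = s * x + t * y := by
    intro r hr
    have hIdec : I * maximalIdeal R = Ideal.span {x} * I ⊔ Ideal.span {y} * I := by
      rw [hm, Ideal.span_insert, Ideal.mul_sup, mul_comm I, mul_comm I]
    rw [hIdec] at hr
    obtain ⟨u, hu, w, hw, huw⟩ := Submodule.mem_sup.1 hr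
    obtain ⟨s, hs, hsu⟩ := Ideal.mem_span_singleton_mul.1 hu
    obtain ⟨t, ht, htw⟩ := Ideal.mem_span_singleton_mul.1 hw
    exact ⟨s, hs, t, ht, by rw [← huw, ← hsu, ← htw]; ring⟩
  -- minors ≤ I
  have hminors_le : minorsIdeal M ≤ I := by
    rw [minorsIdeal, Ideal.span_le]
    rintro r ⟨v, hv, w, hw, rfl⟩
    set d := det2 v w with hddef
    have hqv : v 0 * y - v 1 * x ∈ I := (hmemM v).1 hv
    have hqw : w 0 * y - w 1 * x ∈ I := (hmemM w).1 hw
    have hvco := hcoord v hv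
    have hwco := hcoord w hw
    have hdx : d * x ∈ I * maximalIdeal R := by
      rw [show d * x = (v 0 * y - v 1 * x) * w 0 - (w 0 * y - w 1 * x) * v 0 by
        rw [hddef, det2]; ring]
      exact Submodule.sub_mem _ (Ideal.mul_mem_mul hqv hwco.1) (Ideal.mul_mem_mul hqw hvco.1)
    have hdy : d * y ∈ I * maximalIdeal R := by
      rw [show d * y = (v 0 * y - v 1 * x) * w 1 - (w 0 * y - w 1 * x) * v 1 by
        rw [hddef, det2]; ring]
      exact Submodule.sub_mem _ (Ideal.mul_mem_mul hqv hwco.2) (Ideal.mul_mem_mul hqw hvco.2)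
    obtain ⟨s, hs, t, ht, hst⟩ := hImdec d hdx
    -- for d*y we need the analogous decomposition with y: do it by hand
    have hIdec : I * maximalIdeal R = Ideal.span {x} * I ⊔ Ideal.span {y} * I := by
      rw [hm, Ideal.span_insert, Ideal.mul_sup, mul_comm I, mul_comm I]
    rw [hIdec] at hdy
    obtain ⟨u, hu, w', hw', huw'⟩ := Submodule.mem_sup.1 hdy
    obtain ⟨s', hs', hsu'⟩ := Ideal.mem_span_singleton_mul.1 hu
    obtain ⟨t', ht', htw'⟩ := Ideal.mem_span_singleton_mul.1 hw'
    have hdy2 : d * y = s' * x + t' * y := by rw [← huw', ← hsu', ← htw']; ring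
    -- quadratic equation
    have hq : ((d - s) * (d - t') - t * s') * (x * y) = 0 := by
      have e1 : (d - s) * x = t * y := by linear_combination hst
      have e2 : (d - t') * y = s' * x := by linear_combination hdy2
      calc ((d - s) * (d - t') - t * s') * (x * y)
          = ((d - s) * x) * ((d - t') * y) - (t * y) * (s' * x) := by ring
        _ = (t * y) * ((d - t') * y) - (t * y) * (s' * x) := by rw [e1]
        _ = (t * y) * ((d - t') * y - s' * x) := by ring
        _ = 0 := by rw [e2, sub_self, mul_zero]
    have hquad : d ^ 2 + (-(s + t')) * d + (s * t' - t * s') = 0 := by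
      rcases mul_eq_zero.1 hq with h' | h'
      · linear_combination h'
      · exact absurd h' hxy0
    apply hicl
    refine ⟨2, by omega, fun i => if i = 1 then -(s + t') else s * t' - t * s', ?_, ?_⟩
    · intro i h1 h2
      interval_cases i
      · simp only [if_pos rfl]
        rw [pow_one]
        exact neg_mem (Submodule.add_mem _ hs ht')
      · simp only [if_neg (by decide : ¬(2 = 1))]
        rw [pow_two]
        exact Submodule.sub_mem _ (Ideal.mul_mem_mul hs ht') (Ideal.mul_mem_mul ht hs')
    · rw [show Finset.Icc 1 2 = ({1, 2} : Finset ℕ) from by decide,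
        Finset.sum_pair (by decide : (1:ℕ) ≠ 2)]
      norm_num
      linear_combination hquad
  -- I ≤ minors
  have hminors_ge : I ≤ minorsIdeal M := by
    intro g hg
    have hg3 : g ∈ maximalIdeal R ^ 3 := hord hg
    have hdecs : maximalIdeal R ^ 3
        = Ideal.span {x} * maximalIdeal R ^ 2 ⊔ Ideal.span {y} * maximalIdeal R ^ 2 := by
      rw [pow_succ', hm, Ideal.span_insert, Ideal.sup_mul]
    rw [hdecs] at hg3
    obtain ⟨u, hu, w, hw, huw⟩ := Submodule.mem_sup.1 hg3
    obtain ⟨b, hb, hbu⟩ := Ideal.mem_span_singleton_mul.1 hu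
    obtain ⟨c, hc, hcw⟩ := Ideal.mem_span_singleton_mul.1 hw
    set zg : Fin 2 → R := ![-c, b] with hzgdef
    have hzg0 : zg 0 = -c := rfl
    have hzg1 : zg 1 = b := rfl
    have hzgM : zg ∈ M := by
      rw [hmemM, hzg0, hzg1]
      rw [show (-c) * y - b * x = -(x * b + y * c) by ring]
      exact neg_mem (by rw [hbu, hcw, huw]; exact hg)
    apply Ideal.subset_span
    refine ⟨z₀, hz₀M, zg, hzgM, ?_⟩
    rw [det2, hz₀0, hz₀1, hzg0, hzg1, ← huw, ← hbu, ← hcw]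
    ring
  have hminors_eq : minorsIdeal M = I := le_antisymm hminors_le hminors_ge
  have hIbot : I ≠ ⊥ := by
    intro h0
    rw [h0] at hprim
    have : x ∈ Ideal.radical ⊥ := hprim ▸ hxm
    obtain ⟨n, hn⟩ := this
    rcases Nat.eq_zero_or_pos n with h | h
    · rw [h, pow_zero] at hn
      exact one_ne_zero (Submodule.mem_bot R |>.1 hn)
    · exact hx0 (pow_eq_zero_iff (by omega) |>.1 (Submodule.mem_bot R |>.1 hn))
  refine ⟨M, IsNoetherian.noetherian M, hminors_eq ▸ hIbot, ?_, ?_, hminors_eq⟩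
  · -- integrally closed
    intro v hv
    have h1 := hv z₀ hz₀M
    rw [hminors_eq] at h1
    have h2 : det2 v z₀ ∈ I := hicl _ h1
    rw [hmemM]
    rw [det2, hz₀0, hz₀1] at h2
    exact h2
  · -- indecomposable
    intro N P hsup hinf
    by_contra hcon
    push_neg at hcon
    obtain ⟨hN, hP⟩ := hcon
    obtain ⟨n₀, hn₀N, hn₀⟩ := Submodule.ne_bot_iff N |>.1 hN
    obtain ⟨p₀, hp₀P, hp₀⟩ := Submodule.ne_bot_iff P |>.1 hP
    have hNM : N ≤ M := le_trans le_sup_left (le_of_eq hsup)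
    have hPM : P ≤ M := le_trans le_sup_right (le_of_eq hsup)
    have huniq : ∀ n p n' p' : Fin 2 → R, n ∈ N → p ∈ P → n' ∈ N → p' ∈ P →
        n + p = n' + p' → n = n' := by
      intro n p n' p' hn hp hn' hp' he
      have hmem : n - n' ∈ N ⊓ P := by
        constructor
        · exact Submodule.sub_mem _ hn hn'
        · have : n - n' = p' - p := by
            have := he
            abel_nf
            abel_nf at this
            linear_combination (norm := abel) this
          rw [this]
          exact Submodule.sub_mem _ hp' hp
      rw [hinf, Submodule.mem_bot] at hmem
      exact sub_eq_zero.1 hmem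
    -- powers in I
    obtain ⟨k, hkle⟩ := Ideal.exists_radical_pow_le_of_fg I (by
      rw [hprim]; exact IsNoetherian.noetherian _)
    rw [hprim] at hkle
    have hxkI : x ^ k ∈ I := hkle (Ideal.pow_mem_pow hxm k)
    have hykI : y ^ k ∈ I := hkle (Ideal.pow_mem_pow hym k)
    have hxk0 : x ^ k ≠ 0 := pow_ne_zero k hx0
    -- basis-type vectors
    set v1 : Fin 2 → R := ![x ^ k, 0] with hv1def
    set v2 : Fin 2 → R := ![0, x ^ k] with hv2def
    set w1 : Fin 2 → R := ![y ^ k, 0] with hw1def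
    set w2 : Fin 2 → R := ![0, y ^ k] with hw2def
    have hv1M : v1 ∈ M := (hmemM v1).2 (by
      show x ^ k * y - 0 * x ∈ I
      rw [zero_mul, sub_zero]
      exact I.mul_mem_right y hxkI)
    have hv2M : v2 ∈ M := (hmemM v2).2 (by
      show (0 : R) * y - x ^ k * x ∈ I
      rw [zero_mul, zero_sub]
      exact neg_mem (I.mul_mem_right x hxkI))
    have hw1M : w1 ∈ M := (hmemM w1).2 (by
      show y ^ k * y - 0 * x ∈ I
      rw [zero_mul, sub_zero]
      exact I.mul_mem_right y hykI)
    have hw2M : w2 ∈ M := (hmemM w2).2 (by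
      show (0 : R) * y - y ^ k * x ∈ I
      rw [zero_mul, zero_sub]
      exact neg_mem (I.mul_mem_right x hykI))
    have hsup' : ∀ v : Fin 2 → R, v ∈ M → ∃ n ∈ N, ∃ p ∈ P, v = n + p := by
      intro v hvM
      have hv' : v ∈ N ⊔ P := by rw [hsup]; exact hvM
      obtain ⟨n, hn, p, hp, hnp⟩ := Submodule.mem_sup.1 hv'
      exact ⟨n, hn, p, hp, hnp.symm⟩
    obtain ⟨n1, hn1, p1, hp1, hd1⟩ := hsup' v1 hv1M
    obtain ⟨n2, hn2, p2, hp2, hd2⟩ := hsup' v2 hv2M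
    obtain ⟨nw1, hnw1, pw1, hpw1, hdw1⟩ := hsup' w1 hw1M
    obtain ⟨nw2, hnw2, pw2, hpw2, hdw2⟩ := hsup' w2 hw2M
    have hrel1 : y ^ k • n1 = x ^ k • nw1 := by
      apply huniq _ (y ^ k • p1) _ (x ^ k • pw1)
        (Submodule.smul_mem _ _ hn1) (Submodule.smul_mem _ _ hp1)
        (Submodule.smul_mem _ _ hnw1) (Submodule.smul_mem _ _ hpw1)
      calc y ^ k • n1 + y ^ k • p1 = y ^ k • v1 := by rw [hd1, smul_add]
        _ = x ^ k • w1 := by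
            funext i
            fin_cases i <;>
              simp [hv1def, hw1def, Pi.smul_apply, smul_eq_mul] <;> ring
        _ = x ^ k • nw1 + x ^ k • pw1 := by rw [hdw1, smul_add]
    have hrel2 : y ^ k • n2 = x ^ k • nw2 := by
      apply huniq _ (y ^ k • p2) _ (x ^ k • pw2)
        (Submodule.smul_mem _ _ hn2) (Submodule.smul_mem _ _ hp2)
        (Submodule.smul_mem _ _ hnw2) (Submodule.smul_mem _ _ hpw2)
      calc y ^ k • n2 + y ^ k • p2 = y ^ k • v2 := by rw [hd2, smul_add]
        _ = x ^ k • w2 := by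
            funext i
            fin_cases i <;>
              simp [hv2def, hw2def, Pi.smul_apply, smul_eq_mul] <;> ring
        _ = x ^ k • nw2 + x ^ k • pw2 := by rw [hdw2, smul_add]
    have hdvd1 : ∀ i : Fin 2, x ^ k ∣ n1 i := by
      intro i
      apply aux_xkyk hdim x y hm k (n1 i) (nw1 i)
      have hci := congrFun hrel1 i
      simp only [Pi.smul_apply, smul_eq_mul] at hci
      linear_combination hci
    have hdvd2 : ∀ i : Fin 2, x ^ k ∣ n2 i := by
      intro i
      apply aux_xkyk hdim x y hm k (n2 i) (nw2 i)
      have hci := congrFun hrel2 i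
      simp only [Pi.smul_apply, smul_eq_mul] at hci
      linear_combination hci
    obtain ⟨e, he⟩ := hdvd1 0
    obtain ⟨g, hg⟩ := hdvd1 1
    obtain ⟨f, hf⟩ := hdvd2 0
    obtain ⟨h, hh⟩ := hdvd2 1
    have hkey : ∀ v : Fin 2 → R, v ∈ M → ∀ nv pv : Fin 2 → R, nv ∈ N → pv ∈ P →
        v = nv + pv → nv 0 = e * v 0 + f * v 1 ∧ nv 1 = g * v 0 + h * v 1 := by
      intro v hvM nv pv hnv hpv hdv
      have hxv : x ^ k • nv = v 0 • n1 + v 1 • n2 := by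
        apply huniq _ (x ^ k • pv) _ (v 0 • p1 + v 1 • p2)
          (Submodule.smul_mem _ _ hnv) (Submodule.smul_mem _ _ hpv)
          (Submodule.add_mem _ (Submodule.smul_mem _ _ hn1) (Submodule.smul_mem _ _ hn2))
          (Submodule.add_mem _ (Submodule.smul_mem _ _ hp1) (Submodule.smul_mem _ _ hp2))
        calc x ^ k • nv + x ^ k • pv = x ^ k • v := by rw [hdv, smul_add]
          _ = v 0 • v1 + v 1 • v2 := by
              funext i
              fin_cases i <;>
                simp [hv1def, hv2def, Pi.smul_apply, smul_eq_mul] <;> ring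
          _ = v 0 • n1 + v 1 • n2 + (v 0 • p1 + v 1 • p2) := by
              rw [hd1, hd2, smul_add, smul_add]
              abel
      constructor
      · apply mul_left_cancel₀ hxk0
        have h0 := congrFun hxv 0
        simp only [Pi.smul_apply, Pi.add_apply, smul_eq_mul] at h0
        rw [he, hf] at h0
        linear_combination h0
      · apply mul_left_cancel₀ hxk0
        have h1 := congrFun hxv 1
        simp only [Pi.smul_apply, Pi.add_apply, smul_eq_mul] at h1
        rw [hg, hh] at h1
        linear_combination h1
    -- idempotency relations
    have hEn1 := hkey n1 (hNM hn1) n1 0 hn1 (Submodule.zero_mem P) (add_zero n1).symm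
    have hEn2 := hkey n2 (hNM hn2) n2 0 hn2 (Submodule.zero_mem P) (add_zero n2).symm
    have E11 : e = e * e + f * g := by
      apply mul_left_cancel₀ hxk0
      have he1 := hEn1.1
      rw [he, hg] at he1
      linear_combination he1
    have E21 : g = g * e + h * g := by
      apply mul_left_cancel₀ hxk0
      have he1 := hEn1.2
      rw [he, hg] at he1
      linear_combination he1
    have E12 : f = e * f + f * h := by
      apply mul_left_cancel₀ hxk0
      have he1 := hEn2.1
      rw [hf, hh] at he1
      linear_combination he1
    have E22 : h = g * f + h * h := by
      apply mul_left_cancel₀ hxk0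
      have he1 := hEn2.2
      rw [hf, hh] at he1
      linear_combination he1
    -- the z₀ constraint
    obtain ⟨nz, hnz, pz, hpz, hdz⟩ := hsup' z₀ hz₀M
    have hnzc := hkey z₀ hz₀M nz pz hnz hpz hdz
    have hnzI : nz 0 * y - nz 1 * x ∈ I := (hmemM nz).1 (hNM hnz)
    have hL2h : (-g) * x ^ 2 + (e - h) * (x * y) + f * y ^ 2 ∈ maximalIdeal R ^ 3 := by
      have heqz : (-g) * x ^ 2 + (e - h) * (x * y) + f * y ^ 2 = nz 0 * y - nz 1 * x := by
        rw [hnzc.1, hnzc.2, hz₀0, hz₀1]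
        ring
      rw [heqz]
      exact hord hnzI
    obtain ⟨hgm', hehm, hfm⟩ := aux_L2 hdim x y hm hL2h
    have hgm : g ∈ maximalIdeal R := by rwa [neg_mem_iff] at hgm'
    -- helper for the contradiction from e+h=1
    have hsum_ne : e + h = 1 → False := by
      intro hsum
      have hprod : e * (1 - e) ∈ maximalIdeal R := by
        rw [show e * (1 - e) = f * g by linear_combination E11]
        exact Ideal.mul_mem_right _ _ hfm
      rcases (maximalIdeal.isMaximal R).isPrime.mem_or_mem hprod with he' | h1e'
      · have hh' : h ∈ maximalIdeal R := by
          rw [show h = e - (e - h) by ring]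
          exact Submodule.sub_mem _ he' hehm
        exact hone (hsum ▸ Submodule.add_mem _ he' hh')
      · have hh' : h ∈ maximalIdeal R := by
          rw [show h = 1 - e by linear_combination hsum]
          exact h1e'
        have he2 : e ∈ maximalIdeal R := by
          rw [show e = (e - h) + h by ring]
          exact Submodule.add_mem _ hehm hh'
        exact hone (hsum ▸ Submodule.add_mem _ he2 hh')
    by_cases hf0 : f = 0
    · by_cases hg0 : g = 0
      · -- both zero : e, h idempotent
        have hE : e * (1 - e) = 0 := by
          rw [hf0] at E11
          linear_combination E11
        have hH : h * (1 - h) = 0 := by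
          rw [hg0] at E22
          linear_combination E22
        have he01 : e = 0 ∨ e = 1 := by
          rcases mul_eq_zero.1 hE with h' | h'
          · exact Or.inl h'
          · exact Or.inr (by linear_combination -h')
        have hh01 : h = 0 ∨ h = 1 := by
          rcases mul_eq_zero.1 hH with h' | h'
          · exact Or.inl h'
          · exact Or.inr (by linear_combination -h')
        rcases he01 with he0 | he1 <;> rcases hh01 with hh0 | hh1
        · -- e = 0, h = 0 : projection is zero, contradicts n₀ ≠ 0
          have hk0 := hkey n₀ (hNM hn₀N) n₀ 0 hn₀N (Submodule.zero_mem P) (add_zero n₀).symm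
          apply hn₀
          funext i
          fin_cases i
          · show n₀ 0 = 0
            rw [hk0.1, he0, hf0]; ring
          · show n₀ 1 = 0
            rw [hk0.2, hg0, hh0]; ring
        · -- e = 0, h = 1 : e - h = -1 ∈ m
          apply hone
          have : e - h = -1 := by rw [he0, hh1]; ring
          rw [this] at hehm
          rwa [neg_mem_iff] at hehm
        · -- e = 1, h = 0 : e - h = 1 ∈ m
          apply hone
          have : e - h = 1 := by rw [he1, hh0]; ring
          rwa [this] at hehm
        · -- e = 1, h = 1 : projection is identity, contradicts p₀ ≠ 0
          have hk0 := hkey p₀ (hPM hp₀P) 0 p₀ (Submodule.zero_mem N) hp₀P (zero_add p₀).symm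
          apply hp₀
          have hz00 : (0 : Fin 2 → R) 0 = 0 := rfl
          have hz01 : (0 : Fin 2 → R) 1 = 0 := rfl
          funext i
          fin_cases i
          · show p₀ 0 = 0
            have := hk0.1
            rw [hz00, he1, hf0] at this
            linear_combination -this
          · show p₀ 1 = 0
            have := hk0.2
            rw [hz01, hg0, hh1] at this
            linear_combination -this
      · -- g ≠ 0 : from E21, e + h = 1
        apply hsum_ne
        have hfac : g * (e + h - 1) = 0 := by linear_combination -E21
        rcases mul_eq_zero.1 hfac with h' | h'
        · exact absurd h' hg0
        · linear_combination h'
    · -- f ≠ 0 : from E12, e + h = 1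
      apply hsum_ne
      have hfac : f * (e + h - 1) = 0 := by linear_combination -E12
      rcases mul_eq_zero.1 hfac with h' | h'
      · exact absurd h' hf0
      · linear_combination h'
end

section
/- Let R be a two-dimensional regular local ring with m = (x, y), n >= 2, and I = (x^m, xy, y^n) with m >= 2. Suppose M ⊆ R^2 is a module whose generating 2x4 matrix A has entries in m, with entries written as a_i x + b_i y. If every 2x2 minor of A lies in I, then every 2x2 minor of the 2x4 matrix B of the y-coefficients b_i lies in (I : y^2) = (x, y^{n-2}). -/
open IsLocalRing

variable {R : Type*} [CommRing R]

lemma aux_nonunit_mem [IsLocalRing R] (x y : R)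
    (hmax : maximalIdeal R = Ideal.span {x, y}) (d : R) (hd : ¬ IsUnit d) :
    ∃ a b, d = a * x + b * y := by
  have h : d ∈ maximalIdeal R := hd
  rw [hmax, Ideal.mem_span_pair] at h
  obtain ⟨a, b, h⟩ := h
  exact ⟨a, b, h.symm⟩

lemma aux_pow_notMem [IsNoetherianRing R] [IsLocalRing R] [IsDomain R]
    (hdim : ringKrullDim R = 2) (x y : R)
    (hmax : maximalIdeal R = Ideal.span {x, y}) (k : ℕ) :
    y ^ k ∉ Ideal.span {x} := by
  classical
  intro hk
  have hxm : x ∈ maximalIdeal R := hmax ▸ Ideal.subset_span (by simp)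
  have hym : y ∈ maximalIdeal R := hmax ▸ Ideal.subset_span (by simp)
  -- extract a chain of primes of length two
  obtain ⟨q, hq⟩ : ∃ q : LTSeries (PrimeSpectrum R), 2 ≤ q.length := by
    by_contra hno
    push_neg at hno
    have h1 : ringKrullDim R ≤ 1 := by
      refine iSup_le fun p => ?_
      have h2 : p.length ≤ 1 := by have := hno p; omega
      exact_mod_cast h2
    rw [hdim] at h1
    norm_num at h1
  set P : Ideal R := (q ⟨1, by omega⟩).asIdeal with hPdef
  haveI hPp : P.IsPrime := (q ⟨1, by omega⟩).isPrime
  have h01 : (q ⟨0, by omega⟩).asIdeal < P :=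
    (PrimeSpectrum.asIdeal_lt_asIdeal _ _).mpr
      (q.strictMono (show (⟨0, by omega⟩ : Fin (q.length + 1)) < ⟨1, by omega⟩ by
        simp [Fin.lt_def]))
  have hPbot : (⊥ : Ideal R) < P := lt_of_le_of_lt bot_le h01
  have hPm : P < maximalIdeal R := by
    have h12 : P < (q ⟨2, by omega⟩).asIdeal :=
      (PrimeSpectrum.asIdeal_lt_asIdeal _ _).mpr
        (q.strictMono (show (⟨1, by omega⟩ : Fin (q.length + 1)) < ⟨2, by omega⟩ by
          simp [Fin.lt_def]))
    exact lt_of_lt_of_le h12 (IsLocalRing.le_maximalIdeal (q ⟨2, by omega⟩).isPrime.ne_top)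
  have hxP : x ∉ P := by
    intro hxP
    have hyP : y ∈ P := hPp.mem_of_pow_mem k ((Ideal.span_singleton_le_iff_mem P).mpr hxP hk)
    have hle : maximalIdeal R ≤ P := by
      rw [hmax, Ideal.span_le]
      rintro z hz
      simp only [Set.mem_insert_iff, Set.mem_singleton_iff] at hz
      rcases hz with rfl | rfl
      · exact hxP
      · exact hyP
    exact hPm.not_ge hle
  -- localization at P
  set A := Localization.AtPrime P with hA
  set φ := algebraMap R A with hφ
  haveI : IsNoetherianRing A := IsLocalization.isNoetherianRing P.primeCompl A ‹IsNoetherianRing R›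
  haveI : IsDomain A := IsLocalization.isDomain_of_local_atPrime hPp
  set Mp : Ideal A := Ideal.map φ P with hMpdef
  have hMp : Mp = maximalIdeal A := Localization.AtPrime.map_eq_maximalIdeal
  set qI : ℕ → Ideal R := fun n => Ideal.comap φ (Mp ^ n) with hqI
  have hq_anti : ∀ n, qI (n + 1) ≤ qI n :=
    fun n => Ideal.comap_mono (Ideal.pow_le_pow_right (by omega))
  have hq_x : ∀ n c, x * c ∈ qI n → c ∈ qI n := by
    intro n c hc
    have hu : IsUnit (φ x) := IsLocalization.map_units A (⟨x, hxP⟩ : P.primeCompl)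
    have h2 : φ x * φ c ∈ Mp ^ n := by rw [← map_mul]; exact hc
    exact Ideal.mem_comap.mpr ((Ideal.unit_mul_mem_iff_mem _ hu).mp h2)
  have hq_pow : ∀ n, P ^ n ≤ qI n := by
    intro n
    have h3 : P ^ n ≤ Ideal.comap φ (Ideal.map φ (P ^ n)) := Ideal.le_comap_map
    rwa [Ideal.map_pow] at h3
  -- the quotient ring S = R/(x)
  set S := R ⧸ Ideal.span {x} with hS
  have hxt : Ideal.span {x} ≠ (⊤ : Ideal R) := by
    simp only [ne_eq, Ideal.span_singleton_eq_top]
    exact hxm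
  haveI : Nontrivial S := Ideal.Quotient.nontrivial_iff.mpr hxt
  haveI : IsLocalRing S := IsLocalRing.of_surjective' _ Ideal.Quotient.mk_surjective
  set π := Ideal.Quotient.mk (Ideal.span {x}) with hπ
  have hx0 : π x = 0 := Ideal.Quotient.eq_zero_iff_mem.mpr (Ideal.subset_span rfl)
  have hη0 : (π y) ^ k = 0 := by rw [← map_pow, Ideal.Quotient.eq_zero_iff_mem]; exact hk
  -- every nonzero element of S is a unit times a power of π y
  have hclass : ∀ z : S, z ≠ 0 → ∃ (u : S) (i : ℕ), IsUnit u ∧ z = u * (π y) ^ i := by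
    intro z hz
    have hex : ∃ j, z ∉ Ideal.span {(π y) ^ j} := by
      refine ⟨k, ?_⟩
      have hb : Ideal.span {((π y) ^ k)} = (⊥ : Ideal S) := by
        rw [hη0]; exact Ideal.span_singleton_eq_bot.mpr rfl
      rw [hb]
      simpa using hz
    have hj0pos : Nat.find hex ≠ 0 := by
      intro h0
      have hsp := Nat.find_spec hex
      rw [h0, pow_zero] at hsp
      exact hsp (Ideal.mem_span_singleton'.mpr ⟨z, mul_one z⟩)
    have hmem : z ∈ Ideal.span {(π y) ^ (Nat.find hex - 1)} := by
      by_contra hco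
      have := Nat.find_min' hex hco
      omega
    obtain ⟨d, hd⟩ := Ideal.mem_span_singleton'.mp hmem
    by_cases hdu : IsUnit d
    · exact ⟨d, Nat.find hex - 1, hdu, hd.symm⟩
    · exfalso
      obtain ⟨d', rfl⟩ := Ideal.Quotient.mk_surjective (I := Ideal.span {x}) d
      have hd'u : ¬ IsUnit d' := fun h => hdu (h.map π)
      obtain ⟨a2, b2, he⟩ := aux_nonunit_mem x y hmax d' hd'u
      apply Nat.find_spec hex
      refine Ideal.mem_span_singleton'.mpr ⟨π b2, ?_⟩
      obtain ⟨j1, hj1⟩ : ∃ j1, Nat.find hex = j1 + 1 := ⟨Nat.find hex - 1, by omega⟩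
      rw [hj1] at hd ⊢
      simp only [Nat.add_sub_cancel] at hd
      rw [← hd, he, map_add, map_mul, map_mul, hx0, mul_zero, zero_add, pow_succ]
      ring
  -- the images in S of the symbolic powers
  set Q : ℕ → Ideal S := fun n => Ideal.map π (qI n) with hQdef
  have hQanti : ∀ n, Q (n + 1) ≤ Q n := fun n => Ideal.map_mono (hq_anti n)
  have hQex : ∀ n, ∃ i, (π y) ^ i ∈ Q n := by
    intro nn
    refine ⟨k, ?_⟩
    rw [hη0]
    exact zero_mem _
  have hek : ∀ n, Nat.find (hQex n) ≤ k := by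
    intro nn
    refine Nat.find_min' _ ?_
    rw [hη0]
    exact zero_mem _
  have hemono : ∀ n, Nat.find (hQex n) ≤ Nat.find (hQex (n + 1)) :=
    fun n => Nat.find_min' _ ((hQanti n) (Nat.find_spec (hQex (n + 1))))
  obtain ⟨n, hn⟩ : ∃ n, Nat.find (hQex n) = Nat.find (hQex (n + 1)) := by
    by_contra hno2
    push_neg at hno2
    have hstep : ∀ nn, nn ≤ Nat.find (hQex nn) := by
      intro nn
      induction nn with
      | zero => omega
      | succ nn2 ih =>
        have h4 := hemono nn2
        have h5 := hno2 nn2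
        omega
    have h6 := hstep (k + 1)
    have h7 := hek (k + 1)
    omega
  have hQle : Q n ≤ Ideal.span {(π y) ^ (Nat.find (hQex n))} := by
    intro z hz
    rcases eq_or_ne z 0 with rfl | hz0
    · exact zero_mem _
    obtain ⟨u, i, hu, rfl⟩ := hclass z hz0
    have hηi : (π y) ^ i ∈ Q n := by
      obtain ⟨v, hv⟩ := hu.exists_left_inv
      have h8 : v * (u * (π y) ^ i) ∈ Q n := Ideal.mul_mem_left _ _ hz
      rwa [← mul_assoc, hv, one_mul] at h8
    have hei : Nat.find (hQex n) ≤ i := by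
      by_contra hlt
      exact Nat.find_min (hQex n) (by omega) hηi
    exact Ideal.mem_span_singleton'.mpr ⟨u * (π y) ^ (i - Nat.find (hQex n)),
      by rw [mul_assoc, ← pow_add, show i - Nat.find (hQex n) + Nat.find (hQex n) = i by omega]⟩
  have hQeq : Q n ≤ Q (n + 1) := by
    refine hQle.trans ?_
    rw [hn]
    exact (Ideal.span_singleton_le_iff_mem _).mpr (Nat.find_spec (hQex (n + 1)))
  -- Nakayama in R
  have hnak : qI n ≤ qI (n + 1) ⊔ Ideal.span {x} • qI n := by
    intro c hc
    have h9 : π c ∈ Q (n + 1) := hQeq (Ideal.mem_map_of_mem π hc)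
    rw [hQdef] at h9
    obtain ⟨bb, hb, hbc⟩ :=
      (Ideal.mem_map_iff_of_surjective π Ideal.Quotient.mk_surjective).mp h9
    have hsub : c - bb ∈ Ideal.span {x} := by
      rw [← Ideal.Quotient.eq_zero_iff_mem, map_sub, hbc, sub_self]
    obtain ⟨t, ht⟩ := Ideal.mem_span_singleton'.mp hsub
    have htq : t ∈ qI n := by
      apply hq_x n
      have h10 : x * t ∈ qI n := by
        rw [mul_comm, ht]
        exact Submodule.sub_mem _ hc (hq_anti n hb)
      exact h10
    have hc2 : c = bb + x * t := by rw [mul_comm x t, ht]; ring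
    rw [hc2]
    refine Submodule.add_mem_sup hb ?_
    have h11 := Submodule.smul_mem_smul (Ideal.mem_span_singleton_self x) htq
    rwa [smul_eq_mul] at h11
  have hqeq : qI n ≤ qI (n + 1) := by
    refine Submodule.le_of_le_smul_of_le_jacobson_bot (IsNoetherian.noetherian _) ?_ hnak
    rw [IsLocalRing.jacobson_eq_maximalIdeal ⊥ bot_ne_top]
    exact (Ideal.span_singleton_le_iff_mem _).mpr hxm
  -- back in the localization: Nakayama kills Mp ^ n
  have hMple : Mp ^ n ≤ Mp ^ (n + 1) := by
    calc Mp ^ n = Ideal.map φ (P ^ n) := (Ideal.map_pow _ _ _).symm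
    _ ≤ Ideal.map φ (qI n) := Ideal.map_mono (hq_pow n)
    _ ≤ Ideal.map φ (qI (n + 1)) := Ideal.map_mono hqeq
    _ ≤ Mp ^ (n + 1) := Ideal.map_comap_le
  have hMpbot : Mp ^ n = ⊥ := by
    refine Submodule.eq_bot_of_le_smul_of_le_jacobson_bot Mp (Mp ^ n)
      (IsNoetherian.noetherian _) ?_ ?_
    · rw [smul_eq_mul]
      refine hMple.trans ?_
      rw [pow_succ, mul_comm]
    · rw [IsLocalRing.jacobson_eq_maximalIdeal ⊥ bot_ne_top, ← hMp]
  obtain ⟨g, hgP, hg0⟩ := (Submodule.ne_bot_iff P).mp hPbot.ne'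
  have hgn : φ (g ^ n) = 0 := by
    have h12 : g ^ n ∈ qI n := hq_pow n (Ideal.pow_mem_pow hgP n)
    have h13 : φ (g ^ n) ∈ Mp ^ n := h12
    rw [hMpbot] at h13
    exact h13
  have hinj : Function.Injective φ :=
    IsLocalization.injective A P.primeCompl_le_nonZeroDivisors
  have : g ^ n = 0 := hinj (by rw [map_zero]; exact hgn)
  exact pow_ne_zero n hg0 this

lemma aux_cancel [IsNoetherianRing R] [IsLocalRing R] [IsDomain R]
    (hdim : ringKrullDim R = 2) (x y : R)
    (hmax : maximalIdeal R = Ideal.span {x, y}) :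
    ∀ c : R, y * c ∈ Ideal.span {x} → c ∈ Ideal.span {x} := by
  intro c hc
  have hpow := aux_pow_notMem hdim x y hmax
  have hxm : x ∈ maximalIdeal R := hmax ▸ Ideal.subset_span (by simp)
  have hym : y ∈ maximalIdeal R := hmax ▸ Ideal.subset_span (by simp)
  set S := R ⧸ Ideal.span {x} with hS
  have hxt : Ideal.span {x} ≠ (⊤ : Ideal R) := by
    simp only [ne_eq, Ideal.span_singleton_eq_top]
    exact hxm
  haveI : Nontrivial S := Ideal.Quotient.nontrivial_iff.mpr hxt
  haveI : IsLocalRing S := IsLocalRing.of_surjective' _ Ideal.Quotient.mk_surjective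
  set π := Ideal.Quotient.mk (Ideal.span {x}) with hπ
  have hx0 : π x = 0 := Ideal.Quotient.eq_zero_iff_mem.mpr (Ideal.subset_span rfl)
  have hηt : Ideal.span {π y} ≠ (⊤ : Ideal S) := by
    simp only [ne_eq, Ideal.span_singleton_eq_top]
    intro hu
    obtain ⟨v, hv⟩ := hu.exists_left_inv
    obtain ⟨v', rfl⟩ := Ideal.Quotient.mk_surjective (I := Ideal.span {x}) v
    have hsub : v' * y - 1 ∈ Ideal.span {x} := by
      rw [← Ideal.Quotient.eq_zero_iff_mem, map_sub, map_one, map_mul, hv, sub_self]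
    have h1m : (1 : R) ∈ maximalIdeal R := by
      have h2 : v' * y ∈ maximalIdeal R := Ideal.mul_mem_left _ v' hym
      have h3 : v' * y - 1 ∈ maximalIdeal R :=
        ((Ideal.span_singleton_le_iff_mem _).mpr hxm) hsub
      have h4 := Submodule.sub_mem _ h2 h3
      simp only [sub_sub_cancel] at h4
      exact h4
    exact (IsLocalRing.maximalIdeal.isMaximal R).ne_top ((Ideal.eq_top_iff_one _).mpr h1m)
  have hηc : π y * π c = 0 := by
    rw [← map_mul, Ideal.Quotient.eq_zero_iff_mem]
    exact hc
  have hall : ∀ j : ℕ, π c ∈ Ideal.span {π y} ^ j := by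
    intro j
    induction j with
    | zero => simp
    | succ j ih =>
      rw [Ideal.span_singleton_pow] at ih ⊢
      obtain ⟨d, hd⟩ := Ideal.mem_span_singleton'.mp ih
      by_cases hdu : IsUnit d
      · exfalso
        have h0 : d * (π y) ^ (j + 1) = 0 := by
          rw [pow_succ, ← mul_assoc, hd, mul_comm]
          exact hηc
        obtain ⟨v, hv⟩ := hdu.exists_left_inv
        have h5 : (π y) ^ (j + 1) = 0 := by
          have h6 : v * (d * (π y) ^ (j + 1)) = (π y) ^ (j + 1) := by
            rw [← mul_assoc, hv, one_mul]
          rw [h0, mul_zero] at h6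
          exact h6.symm
        apply hpow (j + 1)
        rw [← Ideal.Quotient.eq_zero_iff_mem, map_pow]
        exact h5
      · obtain ⟨d', rfl⟩ := Ideal.Quotient.mk_surjective (I := Ideal.span {x}) d
        have hd'u : ¬ IsUnit d' := fun h => hdu (h.map π)
        obtain ⟨a2, b2, he⟩ := aux_nonunit_mem x y hmax d' hd'u
        refine Ideal.mem_span_singleton'.mpr ⟨π b2, ?_⟩
        rw [← hd, he, map_add, map_mul, map_mul, hx0, mul_zero, zero_add, pow_succ]
        ring
  have hbot : π c = 0 := by
    have hKrull := Ideal.iInf_pow_eq_bot_of_isLocalRing (I := Ideal.span {π y}) hηt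
    have h7 : π c ∈ (⨅ i : ℕ, Ideal.span {π y} ^ i) := Submodule.mem_iInf _ |>.mpr hall
    rw [hKrull] at h7
    simpa using h7
  rwa [Ideal.Quotient.eq_zero_iff_mem] at hbot


theorem stmt16 [IsNoetherianRing R] [IsLocalRing R] [IsDomain R]
    (hdim : ringKrullDim R = 2)
    (x y : R) (hmax : maximalIdeal R = Ideal.span {x, y})
    (m n : ℕ) (hm : 2 ≤ m) (hn : 2 ≤ n)
    (a b : Fin 2 → Fin 4 → R)
    (hA : ∀ j k : Fin 4,
      (a 0 j * x + b 0 j * y) * (a 1 k * x + b 1 k * y) -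
          (a 0 k * x + b 0 k * y) * (a 1 j * x + b 1 j * y) ∈
        Ideal.span {x ^ m, x * y, y ^ n}) :
    (Ideal.span {x ^ m, x * y, y ^ n}).colon (Ideal.span {y ^ 2}) =
        Ideal.span {x, y ^ (n - 2)} ∧
      ∀ j k : Fin 4,
        b 0 j * b 1 k - b 0 k * b 1 j ∈ Ideal.span {x, y ^ (n - 2)} := by
  have hkey : ∀ c : R, y * c ∈ Ideal.span {x} → c ∈ Ideal.span {x} :=
    aux_cancel hdim x y hmax
  have hyn : y ^ n = y ^ 2 * y ^ (n - 2) := by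
    rw [← pow_add]
    congr 1
    omega
  have hxm2 : x ^ m = x * x ^ (m - 1) := by
    conv_lhs => rw [show m = 1 + (m - 1) by omega, pow_add, pow_one]
  have aux : ∀ r w : R, r * y ^ 2 + x * w ∈ Ideal.span {x ^ m, x * y, y ^ n} →
      r ∈ Ideal.span {x, y ^ (n - 2)} := by
    intro r w hmem
    rw [Ideal.mem_span_insert] at hmem
    obtain ⟨α, z, hz, h1⟩ := hmem
    rw [Ideal.mem_span_pair] at hz
    obtain ⟨β, γ, h2⟩ := hz
    have hx1 : y * (y * (r - γ * y ^ (n - 2))) ∈ Ideal.span {x} := by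
      refine Ideal.mem_span_singleton'.mpr ⟨α * x ^ (m - 1) + β * y - w, ?_⟩
      rw [← h2] at h1
      linear_combination -h1 - γ * hyn - α * hxm2
    have hx2 := hkey _ (hkey _ hx1)
    obtain ⟨s, hs⟩ := Ideal.mem_span_singleton'.mp hx2
    refine Ideal.mem_span_pair.mpr ⟨s, γ, ?_⟩
    linear_combination hs
  constructor
  · apply le_antisymm
    · intro r hr
      have hry : r * y ^ 2 ∈ Ideal.span {x ^ m, x * y, y ^ n} :=
        Ideal.mem_colon_span_singleton.mp hr
      exact aux r 0 (by rw [mul_zero, add_zero]; exact hry)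
    · rw [Ideal.span_le]
      rintro z hz
      simp only [Set.mem_insert_iff, Set.mem_singleton_iff] at hz
      rcases hz with hz | hz
      · rw [SetLike.mem_coe, hz, Ideal.mem_colon_span_singleton]
        have h3 : x * y ∈ Ideal.span {x ^ m, x * y, y ^ n} :=
          Ideal.subset_span (by simp)
        have h4 := Ideal.mul_mem_right y _ h3
        have h5 : x * y * y = x * y ^ 2 := by ring
        rwa [h5] at h4
      · rw [SetLike.mem_coe, hz, Ideal.mem_colon_span_singleton]
        have h6 : y ^ (n - 2) * y ^ 2 = y ^ n := by
          rw [← pow_add]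
          congr 1
          omega
        rw [h6]
        exact Ideal.subset_span (by simp)
  · intro j k
    refine aux (b 0 j * b 1 k - b 0 k * b 1 j)
      ((a 0 j * a 1 k - a 0 k * a 1 j) * x +
        (a 0 j * b 1 k + b 0 j * a 1 k - a 0 k * b 1 j - b 0 k * a 1 j) * y) ?_
    have heq : (b 0 j * b 1 k - b 0 k * b 1 j) * y ^ 2 +
        x * ((a 0 j * a 1 k - a 0 k * a 1 j) * x +
          (a 0 j * b 1 k + b 0 j * a 1 k - a 0 k * b 1 j - b 0 k * a 1 j) * y) =
        (a 0 j * x + b 0 j * y) * (a 1 k * x + b 1 k * y) -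
          (a 0 k * x + b 0 k * y) * (a 1 j * x + b 1 j * y) := by ring
    rw [heq]
    exact hA j k
end

section
/- Let R be a two-dimensional regular local ring with m = (x,y) and let J, K be simple integrally closed m-primary ideals with ord(J) = ord(K) = 1 and J + K = m. Then the product JK is of the form (x'^m, x'y', y'^n) for some m, n >= 2 and some regular system of parameters x', y' of R. -/
open IsLocalRing

variable {R : Type*} [CommRing R]

section Aux

variable {S : Type*} [CommRing S]

/-- In a local ring, an `m`-primary-type ideal containing `a` with `(a,y) = m`
has the form `(a, y^s)`. -/
lemma aux_form [IsLocalRing S] (J : Ideal S) (a y : S)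
    (haJ : a ∈ J) (hm : Ideal.span {a, y} = maximalIdeal S)
    (hex : ∃ N, y ^ N ∈ J) (hJtop : J ≠ ⊤) :
    ∃ s, 1 ≤ s ∧ J = Ideal.span {a, y ^ s} := by
  classical
  set s := Nat.find hex with hsdef
  have hys : y ^ s ∈ J := Nat.find_spec hex
  have hmin : ∀ k < s, y ^ k ∉ J := fun k hk => Nat.find_min hex hk
  have hs1 : 1 ≤ s := by
    rcases Nat.eq_zero_or_pos s with h0 | h
    · exfalso
      apply hJtop
      rw [Ideal.eq_top_iff_one]
      simpa [h0] using hys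
    · exact h
  refine ⟨s, hs1, le_antisymm ?_ ?_⟩
  · have key : ∀ k, k ≤ s → J ≤ Ideal.span {a, y ^ k} := by
      intro k
      induction k with
      | zero =>
        intro _ r _
        rw [pow_zero]
        exact Ideal.mem_span_pair.2 ⟨0, r, by ring⟩
      | succ k ih =>
        intro hk r hr
        have hrk : r ∈ Ideal.span {a, y ^ k} := ih (Nat.le_of_succ_le hk) hr
        obtain ⟨g, h, hgh⟩ := Ideal.mem_span_pair.1 hrk
        by_cases hu : IsUnit h
        · exfalso
          apply hmin k (Nat.lt_of_succ_le hk)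
          obtain ⟨w, hw⟩ := hu
          have hy : y ^ k = ↑w⁻¹ * (r - g * a) := by
            have h1 : (↑w⁻¹ : S) * h = 1 := by rw [← hw]; exact_mod_cast w.inv_mul
            linear_combination (↑w⁻¹ : S) * hgh - y ^ k * h1
          rw [hy]
          exact J.mul_mem_left _ (J.sub_mem hr (J.mul_mem_left _ haJ))
        · have hhm : h ∈ Ideal.span {a, y} := by
            rw [hm, IsLocalRing.mem_maximalIdeal]
            exact hu
          obtain ⟨p, q, hpq⟩ := Ideal.mem_span_pair.1 hhm
          exact Ideal.mem_span_pair.2 ⟨g + p * y ^ k, q, by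
            linear_combination hgh + y ^ k * hpq⟩
    exact key s le_rfl
  · rw [Ideal.span_le]
    rintro z (rfl | rfl)
    · exact haJ
    · exact hys

/-- Completing a non-`m²` element of `m` to a regular system of parameters. -/
lemma aux_complete [IsLocalRing S] (x y a : S)
    (hmax : maximalIdeal S = Ideal.span {x, y})
    (ham : a ∈ maximalIdeal S) (ha2 : a ∉ maximalIdeal S ^ 2) :
    ∃ b, Ideal.span {a, b} = maximalIdeal S := by
  have hxm : x ∈ maximalIdeal S := by rw [hmax]; exact Ideal.subset_span (by simp)
  have hym : y ∈ maximalIdeal S := by rw [hmax]; exact Ideal.subset_span (by simp)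
  obtain ⟨α, β, hab⟩ := Ideal.mem_span_pair.1 (hmax ▸ ham)
  by_cases hα : IsUnit α
  · obtain ⟨u, hu⟩ := hα
    refine ⟨y, le_antisymm ?_ ?_⟩
    · rw [Ideal.span_le]; rintro z (rfl | rfl); exacts [ham, hym]
    · rw [hmax, Ideal.span_le]
      rintro z (rfl | rfl)
      · refine Ideal.mem_span_pair.2 ⟨↑u⁻¹, -(↑u⁻¹ * β), ?_⟩
        have h1 : (↑u⁻¹ : S) * α = 1 := by rw [← hu]; exact_mod_cast u.inv_mul
        linear_combination (-(↑u⁻¹ : S)) * hab + z * h1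
      · exact Ideal.subset_span (by simp)
  · by_cases hβ : IsUnit β
    · obtain ⟨u, hu⟩ := hβ
      refine ⟨x, le_antisymm ?_ ?_⟩
      · rw [Ideal.span_le]; rintro z (rfl | rfl); exacts [ham, hxm]
      · rw [hmax, Ideal.span_le]
        rintro z (rfl | rfl)
        · exact Ideal.subset_span (by simp)
        · refine Ideal.mem_span_pair.2 ⟨↑u⁻¹, -(↑u⁻¹ * α), ?_⟩
          have h1 : (↑u⁻¹ : S) * β = 1 := by rw [← hu]; exact_mod_cast u.inv_mul
          linear_combination (-(↑u⁻¹ : S)) * hab + z * h1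
    · exfalso
      apply ha2
      have hαm : α ∈ maximalIdeal S := hα
      have hβm : β ∈ maximalIdeal S := hβ
      rw [pow_two, ← hab]
      exact Ideal.add_mem _ (Ideal.mul_mem_mul hαm hxm) (Ideal.mul_mem_mul hβm hym)

/-- Product of two order-one ideals in "compatible" form. -/
lemma aux_prod (u v : S) (s t : ℕ) :
    Ideal.span {u, v ^ (s + 1)} * Ideal.span {v, u ^ (t + 1)} =
      Ideal.span {u ^ (t + 2), u * v, v ^ (s + 2)} := by
  apply le_antisymm
  · rw [Ideal.mul_le]
    intro r hr w hw
    obtain ⟨g, h, hgh⟩ := Ideal.mem_span_pair.1 hr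
    obtain ⟨p, q, hpq⟩ := Ideal.mem_span_pair.1 hw
    have h1 : u ^ (t + 2) ∈ Ideal.span {u ^ (t + 2), u * v, v ^ (s + 2)} :=
      Ideal.subset_span (by simp)
    have h2 : u * v ∈ Ideal.span {u ^ (t + 2), u * v, v ^ (s + 2)} :=
      Ideal.subset_span (by simp)
    have h3 : v ^ (s + 2) ∈ Ideal.span {u ^ (t + 2), u * v, v ^ (s + 2)} :=
      Ideal.subset_span (by simp)
    have e : r * w = (g * q) * u ^ (t + 2) +
        (g * p + h * q * (u ^ t * v ^ s)) * (u * v) + (h * p) * v ^ (s + 2) := by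
      rw [← hgh, ← hpq]; ring
    rw [e]
    exact Ideal.add_mem _ (Ideal.add_mem _ (Ideal.mul_mem_left _ _ h1)
      (Ideal.mul_mem_left _ _ h2)) (Ideal.mul_mem_left _ _ h3)
  · rw [Ideal.span_le]
    have hu1 : u ∈ Ideal.span {u, v ^ (s + 1)} := Ideal.subset_span (by simp)
    have hvs : v ^ (s + 1) ∈ Ideal.span {u, v ^ (s + 1)} := Ideal.subset_span (by simp)
    have hv1 : v ∈ Ideal.span {v, u ^ (t + 1)} := Ideal.subset_span (by simp)
    have hut : u ^ (t + 1) ∈ Ideal.span {v, u ^ (t + 1)} := Ideal.subset_span (by simp)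
    rintro z (rfl | rfl | rfl)
    · have : u ^ (t + 2) = u * u ^ (t + 1) := by ring
      rw [this]; exact Ideal.mul_mem_mul hu1 hut
    · exact Ideal.mul_mem_mul hu1 hv1
    · have : v ^ (s + 2) = v ^ (s + 1) * v := by ring
      rw [this]; exact Ideal.mul_mem_mul hvs hv1

lemma aux_rev3 (p q r : S) : Ideal.span {p, q, r} = Ideal.span ({r, q, p} : Set S) := by
  congr 1
  ext z
  simp only [Set.mem_insert_iff, Set.mem_singleton_iff]
  tauto


lemma aux_prod2 (u v : S) (t : ℕ) :
    Ideal.span {v, u} * Ideal.span {v, u ^ (t + 1)} =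
      Ideal.span {v ^ 2, v * u, u ^ (t + 2)} := by
  have h := aux_prod u v 0 t
  norm_num at h
  rw [Set.pair_comm v u, h, aux_rev3, mul_comm u v]

end Aux

theorem stmt18 [IsNoetherianRing R] [IsLocalRing R] [IsDomain R]
    [Infinite (ResidueField R)]
    (hdim : ringKrullDim R = 2)
    (x y : R) (hmax : maximalIdeal R = Ideal.span {x, y})
    (J K : Ideal R) (hJs : IsSimpleIdeal J) (hKs : IsSimpleIdeal K)
    (hJicl : IsIntClIdeal J) (hKicl : IsIntClIdeal K)
    (hJprim : J.radical = maximalIdeal R) (hKprim : K.radical = maximalIdeal R)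
    (hJord : ¬ J ≤ maximalIdeal R ^ 2) (hKord : ¬ K ≤ maximalIdeal R ^ 2)
    (hsum : J ⊔ K = maximalIdeal R) :
    ∃ (x' y' : R) (m n : ℕ), 2 ≤ m ∧ 2 ≤ n ∧
      Ideal.span {x', y'} = maximalIdeal R ∧
      J * K = Ideal.span {x' ^ m, x' * y', y' ^ n} := by
  have hmne : maximalIdeal R ≠ ⊤ := (maximalIdeal.isMaximal R).ne_top
  have hJm : J ≤ maximalIdeal R := hJprim ▸ Ideal.le_radical
  have hKm : K ≤ maximalIdeal R := hKprim ▸ Ideal.le_radical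
  have hJtop : J ≠ ⊤ := fun h => hmne (top_le_iff.1 (h ▸ hJm))
  have hKtop : K ≠ ⊤ := fun h => hmne (top_le_iff.1 (h ▸ hKm))
  obtain ⟨a, haJ, ha2⟩ := SetLike.not_le_iff_exists.1 hJord
  obtain ⟨c, hcK, hc2⟩ := SetLike.not_le_iff_exists.1 hKord
  have ham : a ∈ maximalIdeal R := hJm haJ
  have hcm : c ∈ maximalIdeal R := hKm hcK
  have hexJ : ∀ z ∈ maximalIdeal R, ∃ N, z ^ N ∈ J := by
    intro z hz
    rw [← hJprim] at hz
    exact Ideal.mem_radical_iff.1 hz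
  have hexK : ∀ z ∈ maximalIdeal R, ∃ N, z ^ N ∈ K := by
    intro z hz
    rw [← hKprim] at hz
    exact Ideal.mem_radical_iff.1 hz
  by_cases hac : Ideal.span {a, c} = maximalIdeal R
  · -- a and c form a regular system of parameters
    obtain ⟨s, hs1, hJeq⟩ := aux_form J a c haJ hac (hexJ c hcm) hJtop
    have hca : Ideal.span {c, a} = maximalIdeal R := by rw [Set.pair_comm]; exact hac
    obtain ⟨t, ht1, hKeq⟩ := aux_form K c a hcK hca (hexK a ham) hKtop
    obtain ⟨s', rfl⟩ : ∃ s', s = s' + 1 := ⟨s - 1, by omega⟩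
    obtain ⟨t', rfl⟩ : ∃ t', t = t' + 1 := ⟨t - 1, by omega⟩
    exact ⟨a, c, t' + 2, s' + 2, by omega, by omega, hac, by rw [hJeq, hKeq, aux_prod]⟩
  · -- a and c are dependent mod m²; complete a to (a, b) = m
    obtain ⟨b, hab⟩ := aux_complete x y a hmax ham ha2
    have hbm : b ∈ maximalIdeal R := by
      rw [← hab]; exact Ideal.subset_span (by simp)
    have hcab : c ∈ Ideal.span {a, b} := by rw [hab]; exact hcm
    obtain ⟨g, h, hgh⟩ := Ideal.mem_span_pair.1 hcab
    have hh : ¬ IsUnit h := by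
      intro hu
      apply hac
      obtain ⟨w, hw⟩ := hu
      have h1 : (↑w⁻¹ : R) * h = 1 := by rw [← hw]; exact_mod_cast w.inv_mul
      have hbac : b ∈ Ideal.span {a, c} := by
        refine Ideal.mem_span_pair.2 ⟨-(↑w⁻¹ * g), ↑w⁻¹, ?_⟩
        linear_combination (-(↑w⁻¹ : R)) * hgh + b * h1
      apply le_antisymm
      · rw [Ideal.span_le]; rintro z (rfl | rfl); exacts [ham, hcm]
      · rw [← hab, Ideal.span_le]
        rintro z (rfl | rfl)
        · exact Ideal.subset_span (by simp)
        · exact hbac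
    have hhmm : h ∈ maximalIdeal R := (IsLocalRing.mem_maximalIdeal h).2 hh
    have hg : IsUnit g := by
      by_contra hgu
      apply hc2
      have hgm : g ∈ maximalIdeal R := (IsLocalRing.mem_maximalIdeal g).2 hgu
      rw [pow_two, ← hgh]
      exact Ideal.add_mem _ (Ideal.mul_mem_mul hgm ham) (Ideal.mul_mem_mul hhmm hbm)
    have hcb : Ideal.span {c, b} = maximalIdeal R := by
      apply le_antisymm
      · rw [Ideal.span_le]; rintro z (rfl | rfl); exacts [hcm, hbm]
      · rw [← hab, Ideal.span_le]
        rintro z (rfl | rfl)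
        · obtain ⟨w, hw⟩ := hg
          refine Ideal.mem_span_pair.2 ⟨↑w⁻¹, -(↑w⁻¹ * h), ?_⟩
          have h1 : (↑w⁻¹ : R) * g = 1 := by rw [← hw]; exact_mod_cast w.inv_mul
          linear_combination (-(↑w⁻¹ : R)) * hgh + z * h1
        · exact Ideal.subset_span (by simp)
    obtain ⟨s, hs1, hJeq⟩ := aux_form J a b haJ hab (hexJ b hbm) hJtop
    obtain ⟨t, ht1, hKeq⟩ := aux_form K c b hcK hcb (hexK b hbm) hKtop
    by_cases hs : s = 1
    · -- J = m
      subst hs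
      obtain ⟨t', rfl⟩ : ∃ t', t = t' + 1 := ⟨t - 1, by omega⟩
      refine ⟨c, b, 2, t' + 2, le_rfl, by omega, hcb, ?_⟩
      have hJ' : J = Ideal.span {c, b} := by rw [hJeq, pow_one, hab, hcb]
      rw [hJ', hKeq, aux_prod2]
    · by_cases ht : t = 1
      · -- K = m
        subst ht
        obtain ⟨s', rfl⟩ : ∃ s', s = s' + 1 := ⟨s - 1, by omega⟩
        refine ⟨a, b, 2, s' + 2, le_rfl, by omega, hab, ?_⟩
        have hK' : K = Ideal.span {a, b} := by rw [hKeq, pow_one, hcb, hab]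
        rw [hK', hJeq, mul_comm, aux_prod2]
      · -- s, t ≥ 2 : then m is principal, generated by a
        obtain ⟨s', rfl⟩ : ∃ s', s = s' + 2 := ⟨s - 2, by omega⟩
        obtain ⟨t', rfl⟩ : ∃ t', t = t' + 2 := ⟨t - 2, by omega⟩
        have hbJK : b ∈ J ⊔ K := by rw [hsum]; exact hbm
        obtain ⟨j, hj, k, hk, hjk⟩ := Submodule.mem_sup.1 hbJK
        rw [hJeq] at hj
        rw [hKeq] at hk
        obtain ⟨p, q, hpq⟩ := Ideal.mem_span_pair.1 hj
        obtain ⟨r0, w0, hrw⟩ := Ideal.mem_span_pair.1 hk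
        have hbe : b * (1 - (q * b ^ (s' + 1) + r0 * h + w0 * b ^ (t' + 1)))
            = (p + r0 * g) * a := by
          linear_combination (-1 : R) * hjk - hpq - hrw - r0 * hgh
        have hem : q * b ^ (s' + 1) + r0 * h + w0 * b ^ (t' + 1) ∈ maximalIdeal R := by
          refine Ideal.add_mem _ (Ideal.add_mem _ ?_ ?_) ?_
          · exact Ideal.mul_mem_left _ _ (Ideal.pow_mem_of_mem _ hbm _ (by omega))
          · exact Ideal.mul_mem_left _ _ hhmm
          · exact Ideal.mul_mem_left _ _ (Ideal.pow_mem_of_mem _ hbm _ (by omega))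
        obtain ⟨w, hw⟩ := isUnit_one_sub_self_of_mem_nonunits _ hem
        have h1 : (↑w⁻¹ : R) * (1 - (q * b ^ (s' + 1) + r0 * h + w0 * b ^ (t' + 1))) = 1 := by
          rw [← hw]; exact_mod_cast w.inv_mul
        have hba : b ∈ Ideal.span {a} := by
          rw [Ideal.mem_span_singleton]
          refine ⟨↑w⁻¹ * (p + r0 * g), ?_⟩
          linear_combination (↑w⁻¹ : R) * hbe - b * h1
        have hma : maximalIdeal R = Ideal.span {a} := by
          rw [← hab, Set.pair_comm]
          exact Submodule.span_insert_eq_span hba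
        obtain ⟨z, hbz⟩ := Ideal.mem_span_singleton.1 hba
        have hc' : c = a * (g + h * z) := by linear_combination -hgh + h * hbz
        have hgz : IsUnit (g + h * z) := by
          by_contra hnu
          have hmem : g + h * z ∈ maximalIdeal R := (IsLocalRing.mem_maximalIdeal _).2 hnu
          have hgm : g ∈ maximalIdeal R := by
            have h2 := Ideal.sub_mem _ hmem (Ideal.mul_mem_right z _ hhmm)
            simpa using h2
          exact ((IsLocalRing.mem_maximalIdeal g).1 hgm) hg
        obtain ⟨wg, hwg⟩ := hgz
        have h2 : (↑wg⁻¹ : R) * (g + h * z) = 1 := by rw [← hwg]; exact_mod_cast wg.inv_mul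
        have haK : a ∈ K := by
          have ha_eq : a = ↑wg⁻¹ * c := by
            linear_combination (-(↑wg⁻¹ : R)) * hc' - a * h2
          rw [ha_eq]
          exact K.mul_mem_left _ hcK
        have hJ2 : J = maximalIdeal R :=
          le_antisymm hJm (by rw [hma]; exact (Ideal.span_singleton_le_iff_mem _).2 haJ)
        have hK2 : K = maximalIdeal R :=
          le_antisymm hKm (by rw [hma]; exact (Ideal.span_singleton_le_iff_mem _).2 haK)
        refine ⟨a, a, 2, 2, le_rfl, le_rfl, ?_, ?_⟩
        · rw [Set.pair_eq_singleton, hma]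
        · rw [hJ2, hK2, hma, Ideal.span_singleton_mul_span_singleton]
          have hset : ({a ^ 2, a * a, a ^ 2} : Set R) = {a * a} := by
            rw [pow_two]; simp
          rw [hset]
end
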